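/- arXiv:0802.1739 — 7 statements merged into one kernel-verified Lean document; each statement's English description precedes it below -/
import Mathlib

section
/- Assume n ≥ 2. Let c : ℕ → ℕ be a nondecreasing function such that for every M, every real form with at most M nonzero terms has degree at most c(M). Let P : ℝ^k → ℝ[x_1,…,x_n] be an affine map whose associated linear map is injective, and let K = {λ ∈ ℝ^k : every coefficient of P(λ) is nonnegative}. Assume K has nonempty interior in ℝ^k, and that for every λ ∈ K the polynomial P(λ) has at most N nonzero monomial terms and satisfies P(λ)(x) = 1 whenever x_1 + ⋯ + x_n = 1. Then deg P(λ) ≤ c(N − k) for every λ ∈ K. -/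
open MvPolynomial

set_option maxHeartbeats 1000000

/-- Degree bound for monomial convex families: given a bound `c(M)` (nondecreasing
in `M`) for the degree of any real form with at most `M` terms (i.e. the real form
of a monomial proper map from `B_n` to `B_M`), every member of a `k`-dimensional
convex family of monomial proper maps from `B_n` to `B_N` has degree at most
`c(N - k)`. -/

theorem monomial_family_degree_bound
    (n N k : ℕ) (hn : 2 ≤ n)
    (c : ℕ → ℕ) (hc : Monotone c)
    (hbound : ∀ (M : ℕ) (p : MvPolynomial (Fin n) ℝ),
      (∀ m : Fin n →₀ ℕ, 0 ≤ p.coeff m) →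
      p.support.card ≤ M →
      (∀ x : Fin n → ℝ, (∑ i, x i) = 1 → eval x p = 1) →
      p.totalDegree ≤ c M)
    (P : (Fin k → ℝ) →ᵃ[ℝ] MvPolynomial (Fin n) ℝ)
    (hinj : Function.Injective P.linear)
    (K : Set (Fin k → ℝ))
    (hK : K = {lam : Fin k → ℝ | ∀ m : Fin n →₀ ℕ, 0 ≤ (P lam).coeff m})
    (hKint : (interior K).Nonempty)
    (hterms : ∀ lam ∈ K, (P lam).support.card ≤ N)
    (hproper : ∀ lam ∈ K, ∀ x : Fin n → ℝ, (∑ i, x i) = 1 → eval x (P lam) = 1) :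
    ∀ lam ∈ K, (P lam).totalDegree ≤ c (N - k) := by
  classical
  obtain ⟨l0, hl0⟩ := hKint
  have hl0K : l0 ∈ K := interior_subset hl0
  obtain ⟨ε, hε, hball⟩ := Metric.mem_nhds_iff.mp (mem_interior_iff_mem_nhds.mp hl0)
  -- coefficient formula for affine map
  have hcoeff : ∀ (μ u : Fin k → ℝ) (t : ℝ) (m : Fin n →₀ ℕ),
      coeff m (P (μ + t • u)) = coeff m (P μ) + t * coeff m (P.linear u) := by
    intro μ u t m
    have h1 : P (t • u +ᵥ μ) = P.linear (t • u) +ᵥ P μ := P.map_vadd μ (t • u)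
    rw [vadd_eq_add, vadd_eq_add, add_comm (t • u) μ] at h1
    rw [h1, map_smul, coeff_add, coeff_smul, smul_eq_mul, add_comm]
  have hKco : ∀ μ ∈ K, ∀ m : Fin n →₀ ℕ, 0 ≤ coeff m (P μ) := by
    intro μ hμ m; rw [hK] at hμ; exact hμ m
  -- membership of small perturbations
  have hmem : ∀ (u : Fin k → ℝ), l0 + (ε / (2 * (‖u‖ + 1))) • u ∈ K := by
    intro u
    apply hball
    rw [Metric.mem_ball, dist_eq_norm]
    have h2 : l0 + (ε / (2 * (‖u‖ + 1))) • u - l0 = (ε / (2 * (‖u‖ + 1))) • u := by ring_nf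
    rw [h2, norm_smul]
    have hn1 : (0:ℝ) < ‖u‖ + 1 := by positivity
    have hnu : (0:ℝ) ≤ ‖u‖ := norm_nonneg u
    rw [Real.norm_eq_abs, abs_of_pos (by positivity)]
    rw [div_mul_eq_mul_div, div_lt_iff₀ (by positivity)]
    nlinarith
  have htpos : ∀ u : Fin k → ℝ, (0:ℝ) < ε / (2 * (‖u‖ + 1)) := by
    intro u; positivity
  -- Lemma A : coefficients vanishing at l0 vanish on the whole linear part
  have hA : ∀ (m : Fin n →₀ ℕ), coeff m (P l0) = 0 → ∀ u, coeff m (P.linear u) = 0 := by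
    intro m hm u
    have h1 := hKco _ (hmem u) m
    have h2 := hKco _ (hmem (-u)) m
    rw [hcoeff, hm, zero_add] at h1 h2
    rw [map_neg, coeff_neg] at h2
    have t1 := htpos u
    have t2 := htpos (-u)
    nlinarith
  -- support is contained in support at l0
  have hsupp : ∀ μ : Fin k → ℝ, (P μ).support ⊆ (P l0).support := by
    intro μ m hm
    by_contra h
    rw [mem_support_iff] at hm
    rw [mem_support_iff, not_not] at h
    have hμeq : μ = l0 + (1:ℝ) • (μ - l0) := by simp
    rw [hμeq, hcoeff, h, hA m h (μ - l0)] at hm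
    simp at hm
  -- Lemma B : linear part evaluates to zero on the hyperplane
  have hB : ∀ (u : Fin k → ℝ) (x : Fin n → ℝ), (∑ i, x i) = 1 → eval x (P.linear u) = 0 := by
    intro u x hx
    have h1 := hproper _ (hmem u) x hx
    have h0 := hproper _ hl0K x hx
    have hexp : eval x (P (l0 + (ε / (2 * (‖u‖ + 1))) • u))
        = eval x (P l0) + (ε / (2 * (‖u‖ + 1))) * eval x (P.linear u) := by
      have h1 : P ((ε / (2 * (‖u‖ + 1))) • u +ᵥ l0)
          = P.linear ((ε / (2 * (‖u‖ + 1))) • u) +ᵥ P l0 := P.map_vadd l0 _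
      rw [vadd_eq_add, vadd_eq_add, add_comm _ l0] at h1
      rw [h1, map_smul, map_add, smul_eq_C_mul, map_mul, eval_C, add_comm]
    rw [hexp, h0] at h1
    have := htpos u
    nlinarith
  -- the point x = (1/n, ..., 1/n)
  set x0 : Fin n → ℝ := fun _ => (n : ℝ)⁻¹ with hx0def
  have hnpos : (0:ℝ) < n := by
    have : 0 < n := by omega
    exact_mod_cast this
  have hx0 : ∑ i, x0 i = 1 := by
    rw [hx0def]
    rw [Finset.sum_const, Finset.card_univ, Fintype.card_fin, nsmul_eq_mul]
    field_simp
  have hx0pos : ∀ i, 0 < x0 i := fun i => by rw [hx0def]; positivity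
  -- Lemma C : nonzero elements of the image have a negative coefficient
  have hC : ∀ u : Fin k → ℝ, P.linear u ≠ 0 → ∃ m, coeff m (P.linear u) < 0 := by
    intro u hu
    by_contra h
    push_neg at h
    have h0 := hB u x0 hx0
    rw [eval_eq'] at h0
    have hnn : ∀ m ∈ (P.linear u).support, 0 ≤ coeff m (P.linear u) * ∏ i, x0 i ^ m i := by
      intro m _
      exact mul_nonneg (h m) (le_of_lt (Finset.prod_pos (fun i _ => pow_pos (hx0pos i) _)))
    have hzero := (Finset.sum_eq_zero_iff_of_nonneg hnn).mp h0
    obtain ⟨m, hm⟩ := support_nonempty.mpr hu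
    have hprod : 0 < ∏ i, x0 i ^ m i := Finset.prod_pos (fun i _ => pow_pos (hx0pos i) _)
    have hco0 : coeff m (P.linear u) = 0 := by
      rcases mul_eq_zero.mp (hzero m hm) with h1 | h1
      · exact h1
      · exact absurd h1 (ne_of_gt hprod)
    exact (mem_support_iff.mp hm) hco0
  -- P l0 ≠ 0 and the top monomial
  have hne : P l0 ≠ 0 := by
    intro h
    have := hproper l0 hl0K x0 hx0
    rw [h] at this; simp at this
  obtain ⟨mstar, hms_mem, hms_deg⟩ := Finset.exists_mem_eq_sup (P l0).support
      (support_nonempty.mpr hne) (fun m => m.sum fun _ e => e)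
  have hmstar0 : 0 < coeff mstar (P l0) :=
    lt_of_le_of_ne (hKco l0 hl0K mstar) (Ne.symm (mem_support_iff.mp hms_mem))
  have hTN : (P l0).support.card ≤ N := hterms l0 hl0K
  -- main recursion: kill coefficients until at most T - k terms remain
  have step : ∀ s : ℕ, ∀ μ, μ ∈ K → (P μ).support.card = s → 0 < coeff mstar (P μ) →
      ∃ μ', μ' ∈ K ∧ (P μ').support.card + k ≤ (P l0).support.card ∧
        0 < coeff mstar (P μ') := by
    intro s
    induction s using Nat.strong_induction_on with
    | _ s ih =>
      intro μ hμ hcard hms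
      by_cases hdone : (P μ).support.card + k ≤ (P l0).support.card
      · exact ⟨μ, hμ, hdone, hms⟩
      · push_neg at hdone
        have hsub0 : (P μ).support ⊆ (P l0).support := hsupp μ
        set F : Finset (Fin n →₀ ℕ) := (P l0).support \ (P μ).support with hFdef
        have hFcard : F.card = (P l0).support.card - s := by
          rw [hFdef, Finset.card_sdiff_of_subset hsub0, hcard]
        have hsle : s ≤ (P l0).support.card := hcard ▸ Finset.card_le_card hsub0
        have hFk : F.card < k := by omega
        set Φ : (Fin k → ℝ) →ₗ[ℝ] ({ m // m ∈ F } → ℝ) :=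
          LinearMap.pi (fun m => (lcoeff ℝ (m : Fin n →₀ ℕ)).comp P.linear) with hΦ
        have hker : LinearMap.ker Φ ≠ ⊥ := by
          intro hbot
          have hinjΦ : Function.Injective Φ := LinearMap.ker_eq_bot.mp hbot
          have h1 : Module.finrank ℝ (Fin k → ℝ) ≤ Module.finrank ℝ ({ m // m ∈ F } → ℝ) :=
            LinearMap.finrank_le_finrank_of_injective hinjΦ
          rw [Module.finrank_fin_fun, Module.finrank_fintype_fun_eq_card,
            Fintype.card_coe] at h1
          omega
        obtain ⟨u, huker, hu0⟩ := Submodule.exists_mem_ne_zero_of_ne_bot hker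
        have huF : ∀ m ∈ F, coeff m (P.linear u) = 0 := by
          intro m hm
          have h1 := LinearMap.mem_ker.mp huker
          have h2 := congrFun h1 ⟨m, hm⟩
          simpa [hΦ] using h2
        have key : ∀ w : Fin k → ℝ, w ≠ 0 → (∀ m ∈ F, coeff m (P.linear w) = 0) →
            0 ≤ coeff mstar (P.linear w) →
            ∃ μ', μ' ∈ K ∧ (P μ').support ⊂ (P μ).support ∧ 0 < coeff mstar (P μ') := by
          intro w hw hwF hwstar
          set v := P.linear w with hv
          have hv0 : v ≠ 0 := fun h => hw (hinj (h.trans (map_zero _).symm))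
          have hsuppv : v.support ⊆ (P μ).support := by
            intro m hm
            by_contra hmem'
            rw [mem_support_iff] at hm
            by_cases hml0 : m ∈ (P l0).support
            · exact hm (hwF m (Finset.mem_sdiff.mpr ⟨hml0, hmem'⟩))
            · rw [mem_support_iff, not_not] at hml0
              exact hm (hA m hml0 w)
          obtain ⟨m1, hm1⟩ := hC w hv0
          have hm1supp : m1 ∈ v.support := mem_support_iff.mpr (ne_of_lt hm1)
          set Neg : Finset (Fin n →₀ ℕ) := v.support.filter (fun m => coeff m v < 0) with hNeg
          have hNegne : Neg.Nonempty := ⟨m1, Finset.mem_filter.mpr ⟨hm1supp, hm1⟩⟩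
          set tstar := Neg.inf' hNegne (fun m => coeff m (P μ) / (-(coeff m v))) with htstar
          have hNegpos : ∀ m ∈ Neg, 0 < coeff m (P μ) / (-(coeff m v)) := by
            intro m hm
            rw [hNeg, Finset.mem_filter] at hm
            have hmsupp : m ∈ (P μ).support := hsuppv hm.1
            have hpos : 0 < coeff m (P μ) :=
              lt_of_le_of_ne (hKco μ hμ m) (Ne.symm (mem_support_iff.mp hmsupp))
            exact div_pos hpos (by linarith [hm.2])
          have htpos' : 0 < tstar := by
            rw [htstar, Finset.lt_inf'_iff]
            exact hNegpos
          set μ' := μ + tstar • w with hμ'def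
          have hco' : ∀ m, coeff m (P μ') = coeff m (P μ) + tstar * coeff m v :=
            fun m => hcoeff μ w tstar m
          have hnn : ∀ m, 0 ≤ coeff m (P μ') := by
            intro m
            rw [hco' m]
            rcases lt_or_ge (coeff m v) 0 with hneg | hpos
            · have hmNeg : m ∈ Neg :=
                Finset.mem_filter.mpr ⟨mem_support_iff.mpr (ne_of_lt hneg), hneg⟩
              have hle : tstar ≤ coeff m (P μ) / (-(coeff m v)) := Finset.inf'_le _ hmNeg
              rw [le_div_iff₀ (by linarith)] at hle
              nlinarith
            · have h1 := mul_nonneg htpos'.le hpos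
              have h2 := hKco μ hμ m
              linarith
          have hμ'K : μ' ∈ K := by rw [hK]; exact hnn
          have hsub' : (P μ').support ⊆ (P μ).support := by
            intro m hm
            by_contra hmem'
            rw [mem_support_iff] at hm
            rw [mem_support_iff, not_not] at hmem'
            have hmv : coeff m v = 0 := by
              by_contra hvne
              have h3 : m ∈ (P μ).support := hsuppv (mem_support_iff.mpr hvne)
              rw [mem_support_iff] at h3; exact h3 hmem'
            exact hm (by rw [hco' m, hmem', hmv]; ring)
          obtain ⟨m0, hm0Neg, hm0eq⟩ :=
            Finset.exists_mem_eq_inf' hNegne (fun m => coeff m (P μ) / (-(coeff m v)))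
          have hm0v : coeff m0 v < 0 := (Finset.mem_filter.mp hm0Neg).2
          have hm0supp : m0 ∈ (P μ).support := hsuppv (Finset.mem_filter.mp hm0Neg).1
          have hm0' : coeff m0 (P μ') = 0 := by
            rw [hco' m0]
            have heq : tstar = coeff m0 (P μ) / (-(coeff m0 v)) := hm0eq
            rw [heq]
            have hcne : coeff m0 v ≠ 0 := ne_of_lt hm0v
            have hx : coeff m0 (P μ) / -coeff m0 v * coeff m0 v = -(coeff m0 (P μ)) := by
              rw [div_neg, neg_mul, div_mul_cancel₀ _ hcne]
            rw [hx]; ring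
          have hssub : (P μ').support ⊂ (P μ).support :=
            (Finset.ssubset_iff_of_subset hsub').mpr
              ⟨m0, hm0supp, fun h => (mem_support_iff.mp h) hm0'⟩
          have hms' : 0 < coeff mstar (P μ') := by
            rw [hco' mstar]
            have h1 := mul_nonneg htpos'.le hwstar
            linarith
          exact ⟨μ', hμ'K, hssub, hms'⟩
        rcases le_or_gt 0 (coeff mstar (P.linear u)) with hsign | hsign
        · obtain ⟨μ', h1, h2, h3⟩ := key u hu0 huF hsign
          have hlt : (P μ').support.card < s := by
            rw [← hcard]; exact Finset.card_lt_card h2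
          exact ih _ hlt μ' h1 rfl h3
        · have hF' : ∀ m ∈ F, coeff m (P.linear (-u)) = 0 := by
            intro m hm
            rw [map_neg, coeff_neg, huF m hm, neg_zero]
          have hs' : 0 ≤ coeff mstar (P.linear (-u)) := by
            rw [map_neg, coeff_neg]; linarith
          obtain ⟨μ', h1, h2, h3⟩ := key (-u) (neg_ne_zero.mpr hu0) hF' hs'
          have hlt : (P μ').support.card < s := by
            rw [← hcard]; exact Finset.card_lt_card h2
          exact ih _ hlt μ' h1 rfl h3
  intro lam hlam
  obtain ⟨μ, hμK, hμcard, hμms⟩ := step _ l0 hl0K rfl hmstar0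
  have hcard' : (P μ).support.card ≤ N - k := by omega
  have h1 : (P μ).totalDegree ≤ c (N - k) :=
    hbound (N - k) (P μ) (hKco μ hμK) hcard' (hproper μ hμK)
  have h2 : (P l0).totalDegree ≤ (P μ).totalDegree := by
    have hmem2 : mstar ∈ (P μ).support := mem_support_iff.mpr (ne_of_gt hμms)
    calc (P l0).totalDegree = mstar.sum fun _ e => e := hms_deg
      _ ≤ (P μ).totalDegree := le_totalDegree hmem2
  have h3 : (P lam).totalDegree ≤ (P l0).totalDegree :=
    totalDegree_le_of_support_subset (hsupp lam)
  omega
end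

section
/- Let d ≥ 1 and let q be a polynomial on ℂ^n of degree at most d−1 that does not vanish at any point of the closed unit ball, with homogeneous expansion q = Σ_{j=0}^{d−1} q_j. Then the set S(q) = {z ∈ ℂ^n : Hq(w,z) = 0 for all w ∈ ℂ^n}, where Hq(w,z) = Σ_{j=0}^{d−1} ⟨w,z⟩^{d−j}·q_j(w), is a finite set. -/
open MvPolynomial

/-- The homogenization `Hq(w,z) = Σ_{j=0}^{d-1} ⟨w,z⟩^{d-j} q_j(w)` of a polynomial
`q = Σ_{j=0}^{d-1} q_j` of degree `d-1`, where `⟨w,z⟩ = Σ_l w_l conj(z_l)` and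
`q_j` is the homogeneous part of `q` of degree `j`. -/
noncomputable def homogenizedH (n d : ℕ) (q : MvPolynomial (Fin n) ℂ)
    (w : Fin n → ℂ) (z : EuclideanSpace ℂ (Fin n)) : ℂ :=
  ∑ j ∈ Finset.range d,
    (∑ l, w l * (starRingEnd ℂ) (z l)) ^ (d - j) *
      eval w (homogeneousComponent j q)

/-- If `q` has degree at most `d - 1` (`d ≥ 1`) and does not vanish on the closed
unit ball, then the set `S(q)` of points `z` for which the polynomial
`w ↦ Hq(w,z)` vanishes identically is finite. -/
theorem Sq_finite
    (n d : ℕ) (hd : 1 ≤ d) (q : MvPolynomial (Fin n) ℂ)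
    (hdeg : q.totalDegree ≤ d - 1)
    (hq : ∀ z : EuclideanSpace ℂ (Fin n), ‖z‖ ≤ 1 → eval (fun i => z i) q ≠ 0) :
    {z : EuclideanSpace ℂ (Fin n) |
      ∀ w : Fin n → ℂ, homogenizedH n d q w z = 0}.Finite := by
  -- sum of homogeneous components over range d is q
  have htd : q.totalDegree + 1 ≤ d := by omega
  have hsum : ∑ j ∈ Finset.range d, homogeneousComponent j q = q := by
    conv_rhs => rw [← MvPolynomial.sum_homogeneousComponent q]
    refine (Finset.sum_subset ?_ ?_).symm
    · intro i hi
      simp only [Finset.mem_range] at hi ⊢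
      omega
    · intro i _ hi
      simp only [Finset.mem_range, not_lt] at hi
      exact MvPolynomial.homogeneousComponent_eq_zero i q (by omega)
  -- q(0) ≠ 0
  have h0 : eval (fun _ : Fin n => (0 : ℂ)) q ≠ 0 := by
    have := hq 0 (by simp)
    simpa using this
  -- one-variable restrictions
  set P : Fin n → Polynomial ℂ := fun l =>
    MvPolynomial.aeval (fun i => if i = l then Polynomial.X else 0) q with hP
  have hPeval : ∀ l t, (P l).eval t = eval (fun i => if i = l then t else 0) q := by
    intro l t
    have : (Polynomial.aeval t).comp
        (MvPolynomial.aeval (R := ℂ) (fun i : Fin n => if i = l then Polynomial.X else 0))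
        = MvPolynomial.aeval (fun i : Fin n => if i = l then t else 0) := by
      rw [MvPolynomial.comp_aeval]
      congr 1
      funext i
      by_cases h : i = l <;> simp [h]
    have h2 := congrArg (fun f => f q) this
    simp only [AlgHom.comp_apply] at h2
    exact h2
  have hPne : ∀ l, P l ≠ 0 := by
    intro l hcon
    apply h0
    have := hPeval l 0
    rw [hcon] at this
    simp only [Polynomial.eval_zero] at this
    rw [show (fun i : Fin n => if i = l then (0:ℂ) else 0) = fun _ => (0:ℂ) by
      funext i; simp] at this
    exact this.symm
  set F : Fin n → Set ℂ := fun l =>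
    insert 0 ((fun t : ℂ => ((starRingEnd ℂ) t)⁻¹) '' {t | (P l).IsRoot t}) with hF
  have hFfin : ∀ l, (F l).Finite := fun l =>
    Set.Finite.insert 0 ((Polynomial.finite_setOf_isRoot (hPne l)).image _)
  -- the key inclusion
  have hsub : {z : EuclideanSpace ℂ (Fin n) |
      ∀ w : Fin n → ℂ, homogenizedH n d q w z = 0} ⊆
      {z : EuclideanSpace ℂ (Fin n) | ∀ l, z l ∈ F l} := by
    intro z hz l
    by_cases hzl : z l = 0
    · exact Set.mem_insert_iff.mpr (Or.inl hzl)
    · right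
      refine ⟨((starRingEnd ℂ) (z l))⁻¹, ?_, by simp⟩
      -- show it's a root
      set w : Fin n → ℂ := fun i => if i = l then ((starRingEnd ℂ) (z l))⁻¹ else 0 with hw
      have hinner : (∑ i, w i * (starRingEnd ℂ) (z i)) = 1 := by
        rw [Finset.sum_eq_single l]
        · simp [hw, inv_mul_cancel₀ (by simpa using hzl : (starRingEnd ℂ) (z l) ≠ 0)]
        · intro i _ hi; simp [hw, hi]
        · simp
      have := hz w
      unfold homogenizedH at this
      rw [hinner] at this
      simp only [one_pow, one_mul] at this
      show (P l).eval ((starRingEnd ℂ) (z l))⁻¹ = 0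
      rw [hPeval l, ← hw, ← hsum, map_sum]
      exact this
  refine Set.Finite.subset ?_ hsub
  have : Set.Finite (Set.pi Set.univ F) := Set.Finite.pi hFfin
  exact this.preimage (f := fun z : EuclideanSpace ℂ (Fin n) => (z : Fin n → ℂ))
    ((WithLp.ofLp_injective (p := 2)).injOn) |>.subset (by intro z hz; exact fun l _ => hz l)
end

section
/- Let a_1, …, a_k be finitely many points of the open unit ball B_n. Then there exist an integer N and a rational proper map f = p/q from B_n to B_N in lowest terms such that {z ∈ B_n : p(z) = 0} = {a_1, …, a_k}. -/
open MvPolynomial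

/-- `p/q` is a rational proper map from `B_n` to `B_N` in lowest terms:
`q` does not vanish on the closed ball, no nonconstant polynomial divides `q` and
all the `p_i`, `‖p(z)‖ < |q(z)|` on the open ball, and `‖p(z)‖ = |q(z)|` on the sphere. -/
def IsRationalProperBallMap (n N : ℕ) (p : Fin N → MvPolynomial (Fin n) ℂ)
    (q : MvPolynomial (Fin n) ℂ) : Prop :=
  (∀ z : EuclideanSpace ℂ (Fin n), ‖z‖ ≤ 1 → eval (fun i => z i) q ≠ 0) ∧
  (∀ r : MvPolynomial (Fin n) ℂ, r ∣ q → (∀ i, r ∣ p i) → r.totalDegree = 0) ∧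
  (∀ z : EuclideanSpace ℂ (Fin n), ‖z‖ < 1 →
    ∑ i, ‖eval (fun j => z j) (p i)‖ ^ 2 < ‖eval (fun j => z j) q‖ ^ 2) ∧
  (∀ z : EuclideanSpace ℂ (Fin n), ‖z‖ = 1 →
    ∑ i, ‖eval (fun j => z j) (p i)‖ ^ 2 = ‖eval (fun j => z j) q‖ ^ 2)

/-- The degree of a rational map `p/q`: the maximum of the degrees of the
components of the numerator and of the denominator. -/
def rationalDegree (n N : ℕ) (p : Fin N → MvPolynomial (Fin n) ℂ)
    (q : MvPolynomial (Fin n) ℂ) : ℕ :=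
  max (Finset.univ.sup fun i => (p i).totalDegree) q.totalDegree

namespace RPBM

variable {n : ℕ}

lemma normsq (x : ℂ) : ‖x‖ ^ 2 = Complex.normSq x := by
  rw [Complex.sq_norm]

/-- Compression of a multivariate polynomial to one variable along direction `c`. -/
noncomputable def compress (c : Fin n → ℂ) :
    MvPolynomial (Fin n) ℂ →+* Polynomial ℂ :=
  eval₂Hom Polynomial.C (fun i => Polynomial.C (c i) * Polynomial.X)

lemma compress_homogeneous {d : ℕ} (c : Fin n → ℂ) {h : MvPolynomial (Fin n) ℂ}
    (hh : h.IsHomogeneous d) :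
    compress c h = Polynomial.C (eval c h) * Polynomial.X ^ d := by
  rw [show compress c h
      = eval₂ Polynomial.C (fun i => Polynomial.C (c i) * Polynomial.X) h from rfl,
    eval₂_eq, eval_eq, map_sum, Finset.sum_mul]
  refine Finset.sum_congr rfl fun m hm => ?_
  have hmd : ∑ i ∈ m.support, m i = d := by
    have h2 := hh (mem_support_iff.mp hm)
    rw [Finsupp.weight_apply] at h2
    simpa [Finsupp.sum] using h2
  simp only [mul_pow, Finset.prod_mul_distrib, Finset.prod_pow_eq_pow_sum, map_mul, map_prod,
    map_pow, hmd, mul_assoc]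

lemma coeff_compress (c : Fin n → ℂ) (p : MvPolynomial (Fin n) ℂ) (d : ℕ) :
    (compress c p).coeff d = eval c (homogeneousComponent d p) := by
  conv_lhs => rw [← sum_homogeneousComponent p]
  rw [map_sum, Polynomial.finset_sum_coeff]
  have h1 : ∀ i, ((compress c) (homogeneousComponent i p)).coeff d
      = if i = d then eval c (homogeneousComponent i p) else 0 := by
    intro i
    rw [compress_homogeneous c (homogeneousComponent_isHomogeneous i p),
      Polynomial.coeff_C_mul, Polynomial.coeff_X_pow]
    by_cases h : d = i <;> simp [h, eq_comm]
  simp only [h1]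
  rw [Finset.sum_ite_eq' (Finset.range (p.totalDegree + 1))]
  by_cases hd : d ∈ Finset.range (p.totalDegree + 1)
  · simp [hd]
  · simp only [hd, if_false]
    rw [homogeneousComponent_eq_zero, map_zero]
    simpa using Nat.lt_of_succ_le (Nat.not_lt.mp (by simpa using hd))

lemma natDegree_compress_le (c : Fin n → ℂ) (p : MvPolynomial (Fin n) ℂ) :
    (compress c p).natDegree ≤ p.totalDegree := by
  rw [Polynomial.natDegree_le_iff_coeff_eq_zero]
  intro N hN
  rw [coeff_compress, homogeneousComponent_eq_zero _ _ hN, map_zero]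

lemma top_homogeneousComponent_ne_zero {p : MvPolynomial (Fin n) ℂ} (hp : p ≠ 0) :
    homogeneousComponent p.totalDegree p ≠ 0 := by
  obtain ⟨m, hm, hmd⟩ : ∃ m ∈ p.support, p.totalDegree = m.sum fun _ e => e :=
    Finset.exists_mem_eq_sup _
      (Finset.nonempty_iff_ne_empty.mpr fun h => hp (MvPolynomial.support_eq_empty.mp h)) _
  intro h0
  have := coeff_homogeneousComponent (n := p.totalDegree) (φ := p) m
  rw [h0] at this
  simp only [coeff_zero] at this
  have hdeg : m.degree = p.totalDegree := by
    rw [Finsupp.degree_apply]; simpa [Finsupp.sum] using hmd.symm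
  rw [if_pos hdeg] at this
  exact mem_support_iff.mp hm this.symm

lemma exists_eval_ne_zero {p : MvPolynomial (Fin n) ℂ} (hp : p ≠ 0) :
    ∃ c : Fin n → ℂ, eval c p ≠ 0 := by
  by_contra h
  push_neg at h
  exact hp (MvPolynomial.funext fun x => by simpa using h x)

lemma natDegree_compress_eq {p : MvPolynomial (Fin n) ℂ} {c : Fin n → ℂ}
    (hc : eval c (homogeneousComponent p.totalDegree p) ≠ 0) :
    (compress c p).natDegree = p.totalDegree :=
  le_antisymm (natDegree_compress_le c p)
    (Polynomial.le_natDegree_of_ne_zero (by rwa [coeff_compress]))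

lemma totalDegree_mul_eq {p q : MvPolynomial (Fin n) ℂ} (hp : p ≠ 0) (hq : q ≠ 0) :
    (p * q).totalDegree = p.totalDegree + q.totalDegree := by
  obtain ⟨c, hc⟩ := exists_eval_ne_zero (mul_ne_zero
    (top_homogeneousComponent_ne_zero hp) (top_homogeneousComponent_ne_zero hq))
  rw [map_mul] at hc
  have hcp := left_ne_zero_of_mul hc
  have hcq := right_ne_zero_of_mul hc
  refine le_antisymm (totalDegree_mul p q) ?_
  have hp0 : compress c p ≠ 0 := fun h => hcp (by rw [← coeff_compress, h, Polynomial.coeff_zero])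
  have hq0 : compress c q ≠ 0 := fun h => hcq (by rw [← coeff_compress, h, Polynomial.coeff_zero])
  have h1 : (compress c (p * q)).natDegree = p.totalDegree + q.totalDegree := by
    rw [map_mul, Polynomial.natDegree_mul hp0 hq0, natDegree_compress_eq hcp,
      natDegree_compress_eq hcq]
  rw [← h1]
  exact natDegree_compress_le c (p * q)

lemma totalDegree_eq_zero_of_isUnit {p : MvPolynomial (Fin n) ℂ} (hp : IsUnit p) :
    p.totalDegree = 0 := by
  obtain ⟨v, hv⟩ := isUnit_iff_exists_inv.mp hp
  have h0 : p ≠ 0 := by rintro rfl; simp at hv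
  have h0' : v ≠ 0 := by rintro rfl; simp at hv
  have := totalDegree_mul_eq h0 h0'
  rw [hv, totalDegree_one] at this
  omega

lemma eq_C_of_totalDegree_eq_zero {p : MvPolynomial (Fin n) ℂ} (hp : p.totalDegree = 0) :
    p = C (coeff 0 p) := by
  ext m
  by_cases hm : m = 0
  · subst hm; simp
  · rw [coeff_C, if_neg (Ne.symm hm)]
    by_contra hc
    have hms := mem_support_iff.mpr hc
    have := (totalDegree_eq_zero_iff _ p).mp hp m hms
    exact hm (Finsupp.ext this)




/-- A factor for the tensor-product construction of proper rational ball maps. -/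
structure BallFactor (n : ℕ) where
  p : Fin (n + 1) → MvPolynomial (Fin n) ℂ
  q : MvPolynomial (Fin n) ℂ
  c : ℝ
  Z : Set (Fin n → ℂ)
  hc : 0 < c
  identity : ∀ z : Fin n → ℂ,
    ∑ i, ‖eval z (p i)‖ ^ 2 = ‖eval z q‖ ^ 2 - c * (1 - ∑ i, ‖z i‖ ^ 2)
  hq : ∀ z : Fin n → ℂ, ∑ i, ‖z i‖ ^ 2 ≤ 1 → eval z q ≠ 0
  hzero : ∀ z : Fin n → ℂ, ((∀ i, eval z (p i) = 0) ↔ z ∈ Z)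
  hfac : ∀ s : MvPolynomial (Fin n) ℂ, Prime s → s ∣ q →
    ∃ z : Fin n → ℂ, eval z s = 0 ∧ 1 < ∑ i, ‖z i‖ ^ 2

noncomputable def trivialFactor (n : ℕ) : BallFactor n where
  p := Fin.cons (C (((Real.sqrt 2)⁻¹ : ℝ) : ℂ)) fun i => C (((Real.sqrt 2)⁻¹ : ℝ) : ℂ) * X i
  q := 1
  c := 2⁻¹
  Z := ∅
  hc := by norm_num
  identity := by
    intro z
    have ht : ‖((((Real.sqrt 2)⁻¹ : ℝ)) : ℂ)‖ ^ 2 = 2⁻¹ := by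
      rw [Complex.norm_real, Real.norm_eq_abs, abs_of_nonneg (by positivity)]
      rw [← Real.sqrt_inv, Real.sq_sqrt (by norm_num)]
    rw [Fin.sum_univ_succ]
    simp only [Fin.cons_zero, Fin.cons_succ, eval_C, eval_mul, eval_X, map_one, norm_mul,
      mul_pow, ht]
    rw [← Finset.mul_sum]
    norm_num
    ring
  hq := by intro z _; simp
  hzero := by
    intro z
    simp only [Set.mem_empty_iff_false, iff_false]
    intro h
    have := h 0
    simp only [Fin.cons_zero, eval_C, Complex.ofReal_eq_zero, inv_eq_zero] at this
    exact Real.sqrt_ne_zero'.mpr (by norm_num) this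
  hfac := by
    intro s hs hdvd
    exact absurd (isUnit_of_dvd_one hdvd) hs.not_unit





section Point
variable (a : EuclideanSpace ℂ (Fin n))

noncomputable def ra : ℝ := ∑ i, ‖a i‖ ^ 2

noncomputable def Wa : MvPolynomial (Fin n) ℂ := ∑ i, C (starRingEnd ℂ (a i)) * X i

noncomputable def sa : ℝ := Real.sqrt (1 - ra a)

noncomputable def qa : MvPolynomial (Fin n) ℂ := 1 - Wa a

noncomputable def pa : Fin (n + 1) → MvPolynomial (Fin n) ℂ :=
  Fin.cons (Wa a - C ((ra a : ℝ) : ℂ)) fun i => C ((sa a : ℝ) : ℂ) * (X i - C (a i))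

lemma ra_nonneg : 0 ≤ ra a := Finset.sum_nonneg fun i _ => by positivity

lemma norm_sq_eq (x : EuclideanSpace ℂ (Fin n)) : ‖x‖ ^ 2 = ∑ i, ‖x i‖ ^ 2 := by
  rw [EuclideanSpace.norm_eq, Real.sq_sqrt (Finset.sum_nonneg fun i _ => by positivity)]

variable {a}

lemma ra_lt_one (ha : ‖a‖ < 1) : ra a < 1 := by
  have h1 := norm_sq_eq a
  have h2 : ‖a‖ ^ 2 < 1 := by nlinarith [norm_nonneg a]
  rw [h1] at h2; exact h2

lemma sa_pos (ha : ‖a‖ < 1) : 0 < sa a := Real.sqrt_pos.mpr (by linarith [ra_lt_one ha])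

lemma sa_sq (ha : ‖a‖ < 1) : sa a ^ 2 = 1 - ra a := Real.sq_sqrt (by linarith [ra_lt_one ha])

variable (a)

lemma eval_Wa (z : Fin n → ℂ) : eval z (Wa a) = ∑ i, starRingEnd ℂ (a i) * z i := by
  simp [Wa]

lemma eval_qa (z : Fin n → ℂ) : eval z (qa a) = 1 - ∑ i, starRingEnd ℂ (a i) * z i := by
  simp [qa, eval_Wa]

lemma eval_Wa_self : eval (fun i => a i) (Wa a) = ((ra a : ℝ) : ℂ) := by
  rw [eval_Wa]
  rw [show ((ra a : ℝ) : ℂ) = ∑ i, ((‖a i‖ ^ 2 : ℝ) : ℂ) by rw [ra]; push_cast; ring]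
  refine Finset.sum_congr rfl fun i _ => ?_
  rw [mul_comm, Complex.mul_conj, normsq]

end Point


variable {n : ℕ} {a : EuclideanSpace ℂ (Fin n)}

lemma pa_identity (ha : ‖a‖ < 1) (z : Fin n → ℂ) :
    ∑ i, ‖eval z (pa a i)‖ ^ 2
      = ‖eval z (qa a)‖ ^ 2 - (1 - ra a) * (1 - ∑ i, ‖z i‖ ^ 2) := by
  set w := ∑ i, starRingEnd ℂ (a i) * z i with hw
  have h0 : eval z (pa a 0) = w - ((ra a : ℝ) : ℂ) := by simp [pa, eval_Wa, hw]
  have hsucc : ∀ i : Fin n, eval z (pa a i.succ) = ((sa a : ℝ) : ℂ) * (z i - a i) := by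
    intro i; simp [pa]
  have hq' : eval z (qa a) = 1 - w := by rw [eval_qa, hw]
  rw [Fin.sum_univ_succ, h0, hq']
  simp only [hsucc]
  have hwre : ∑ i, (z i * starRingEnd ℂ (a i)).re = w.re := by
    rw [hw, Complex.re_sum]
    exact Finset.sum_congr rfl fun i _ => by rw [mul_comm]
  have e1 : ‖w - ((ra a : ℝ) : ℂ)‖ ^ 2
      = Complex.normSq w + ra a * ra a - 2 * (w.re * ra a) := by
    rw [normsq, Complex.normSq_sub]
    simp [Complex.normSq_ofReal, Complex.mul_re]
  have e2 : ‖(1 : ℂ) - w‖ ^ 2 = 1 - 2 * w.re + Complex.normSq w := by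
    rw [normsq, Complex.normSq_sub]
    simp; ring
  have e3 : ∑ i, ‖((sa a : ℝ) : ℂ) * (z i - a i)‖ ^ 2
      = (1 - ra a) * ((∑ i, ‖z i‖ ^ 2) + ra a - 2 * w.re) := by
    have hnorm : ∀ i ∈ Finset.univ, ‖((sa a : ℝ) : ℂ) * (z i - a i)‖ ^ 2
        = (1 - ra a) * (‖z i‖ ^ 2 + ‖a i‖ ^ 2 - 2 * (z i * starRingEnd ℂ (a i)).re) := by
      intro i _
      rw [norm_mul, mul_pow, Complex.norm_real, Real.norm_eq_abs, sq_abs, sa_sq ha, normsq,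
        Complex.normSq_sub, normsq, normsq]
    rw [Finset.sum_congr rfl hnorm, ← Finset.mul_sum]
    congr 1
    rw [Finset.sum_sub_distrib, Finset.sum_add_distrib, ← Finset.mul_sum, hwre, ra]
  rw [e1, e2, e3]
  ring



variable {n : ℕ} {a : EuclideanSpace ℂ (Fin n)}

lemma pa_zero (ha : ‖a‖ < 1) (z : Fin n → ℂ) :
    (∀ i, eval z (pa a i) = 0) ↔ z = fun i => a i := by
  constructor
  · intro h
    funext i
    have h2 : ((sa a : ℝ) : ℂ) * (z i - a i) = 0 := by
      have := h i.succ
      rwa [show eval z (pa a i.succ) = ((sa a : ℝ) : ℂ) * (z i - a i) from by simp [pa]] at this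
    have hs : ((sa a : ℝ) : ℂ) ≠ 0 := by
      simp only [ne_eq, Complex.ofReal_eq_zero]
      exact ne_of_gt (sa_pos ha)
    exact sub_eq_zero.mp ((mul_eq_zero.mp h2).resolve_left hs)
  · rintro rfl
    intro i
    refine Fin.cases ?_ (fun j => ?_) i
    · show eval _ (pa a 0) = 0
      rw [show pa a 0 = Wa a - C ((ra a : ℝ) : ℂ) from rfl, map_sub, eval_Wa_self, eval_C,
        sub_self]
    · rw [show pa a j.succ = C ((sa a : ℝ) : ℂ) * (X j - C (a j)) from by simp [pa]]
      simp

lemma qa_ne_zero_eval (z : Fin n → ℂ) (ha : ‖a‖ < 1) (hz : ∑ i, ‖z i‖ ^ 2 ≤ 1) :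
    eval z (qa a) ≠ 0 := by
  set z' : EuclideanSpace ℂ (Fin n) := WithLp.toLp 2 z with hz'
  have hw : (∑ i, starRingEnd ℂ (a i) * z i) = (inner ℂ a z' : ℂ) := by
    simp [PiLp.inner_apply, RCLike.inner_apply, hz', mul_comm]
  have hn1 : ‖z'‖ ≤ 1 := by
    have := norm_sq_eq z'
    nlinarith [norm_nonneg z']
  have hlt : ‖(inner ℂ a z' : ℂ)‖ < 1 := by
    calc ‖(inner ℂ a z' : ℂ)‖ ≤ ‖a‖ * ‖z'‖ := norm_inner_le_norm a z'
    _ ≤ ‖a‖ := by nlinarith [norm_nonneg a]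
    _ < 1 := ha
  rw [eval_qa, hw]
  intro hcon
  rw [sub_eq_zero] at hcon
  rw [← hcon] at hlt
  simp at hlt

lemma qa_ne_zero (a : EuclideanSpace ℂ (Fin n)) : qa a ≠ 0 := by
  intro h
  have : eval (fun _ => 0) (qa a) = 1 := by rw [eval_qa]; simp
  rw [h] at this
  simp at this

lemma qa_fac (ha : ‖a‖ < 1) (s' : MvPolynomial (Fin n) ℂ) (hs' : Prime s') (hdvd : s' ∣ qa a) :
    ∃ z : Fin n → ℂ, eval z s' = 0 ∧ 1 < ∑ i, ‖z i‖ ^ 2 := by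
  by_cases hr : ra a = 0
  · exfalso
    have hA : ∀ i, a i = 0 := by
      intro i
      have h0 : ∑ i, ‖a i‖ ^ 2 = 0 := hr
      have := (Finset.sum_eq_zero_iff_of_nonneg (fun i _ => by positivity)).mp h0 i
        (Finset.mem_univ i)
      have h2 : ‖a i‖ = 0 := by nlinarith [norm_nonneg (a i)]
      exact norm_eq_zero.mp h2
    have hq1 : qa a = 1 := by
      rw [qa, Wa]
      rw [Finset.sum_eq_zero fun i _ => by rw [hA i, map_zero, C_0, zero_mul], sub_zero]
    rw [hq1] at hdvd
    exact hs'.not_unit (isUnit_of_dvd_one hdvd)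
  · have hr0 : 0 < ra a := lt_of_le_of_ne (ra_nonneg a) (Ne.symm hr)
    set z0 : Fin n → ℂ := fun i => a i * ((ra a : ℝ) : ℂ)⁻¹ with hz0
    have hz0sum : ∑ i, ‖z0 i‖ ^ 2 = (ra a)⁻¹ := by
      rw [hz0]
      simp only [norm_mul, mul_pow, norm_inv, Complex.norm_real, Real.norm_eq_abs,
        abs_of_pos hr0]
      rw [← Finset.sum_mul, ← ra]
      field_simp
    have hwa : ∑ i, starRingEnd ℂ (a i) * a i = ((ra a : ℝ) : ℂ) := by
      have := eval_Wa_self a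
      rwa [eval_Wa] at this
    have hevalq : eval z0 (qa a) = 0 := by
      rw [eval_qa]
      have h1 : ∑ i, starRingEnd ℂ (a i) * z0 i = 1 := by
        rw [hz0]
        simp only [← mul_assoc]
        rw [← Finset.sum_mul, hwa, mul_inv_cancel₀]
        simpa using hr
      rw [h1, sub_self]
    have hq0 : qa a ≠ 0 := qa_ne_zero a
    have hdegle : (qa a).totalDegree ≤ 1 := by
      rw [qa]
      refine le_trans (totalDegree_sub _ _) (max_le (by simp [totalDegree_one]) ?_)
      refine le_trans (totalDegree_finset_sum _ _) (Finset.sup_le fun i _ => ?_)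
      refine le_trans (totalDegree_mul _ _) ?_
      simp [totalDegree_C, totalDegree_X]
    have hdegne : (qa a).totalDegree ≠ 0 := by
      intro h
      have hC := eq_C_of_totalDegree_eq_zero h
      have e0 : eval (fun _ => 0) (qa a) = 1 := by rw [eval_qa]; simp
      have e0' : eval (fun _ => 0) (qa a) = coeff 0 (qa a) := by
        conv_lhs => rw [hC]
        simp
      have ez : eval z0 (qa a) = coeff 0 (qa a) := by
        conv_lhs => rw [hC]
        simp
      rw [e0'] at e0
      rw [ez, e0] at hevalq
      exact one_ne_zero hevalq
    obtain ⟨u, hu⟩ := hdvd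
    have hs0 : s' ≠ 0 := by rintro rfl; rw [zero_mul] at hu; exact hq0 hu
    have hu0 : u ≠ 0 := by rintro rfl; rw [mul_zero] at hu; exact hq0 hu
    have hsum : s'.totalDegree + u.totalDegree = (qa a).totalDegree := by
      rw [hu, totalDegree_mul_eq hs0 hu0]
    have hsd : s'.totalDegree ≠ 0 := by
      intro h
      have hC := eq_C_of_totalDegree_eq_zero h
      have : IsUnit s' := by
        rw [hC]
        refine isUnit_iff_exists_inv.mpr ⟨C (coeff 0 s')⁻¹, ?_⟩
        rw [← C_mul, mul_inv_cancel₀, C_1]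
        intro hc; rw [hc, map_zero] at hC; exact hs0 hC
      exact hs'.not_unit this
    have hud : u.totalDegree = 0 := by omega
    have hCu := eq_C_of_totalDegree_eq_zero hud
    have hcune : coeff 0 u ≠ 0 := by intro hc; rw [hc, map_zero] at hCu; exact hu0 hCu
    refine ⟨z0, ?_, ?_⟩
    · have hsplit : eval z0 (qa a) = eval z0 s' * coeff 0 u := by
        rw [hu, map_mul]
        congr 1
        conv_lhs => rw [hCu]
        simp
      rw [hsplit] at hevalq
      exact (mul_eq_zero.mp hevalq).resolve_right hcune
    · rw [hz0sum]
      exact (one_lt_inv₀ hr0).mpr (ra_lt_one ha)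

noncomputable def pointFactor (a : EuclideanSpace ℂ (Fin n)) (ha : ‖a‖ < 1) : BallFactor n where
  p := pa a
  q := qa a
  c := 1 - ra a
  Z := {z | z = fun i => a i}
  hc := by linarith [ra_lt_one ha]
  identity := pa_identity ha
  hq := fun z hz => qa_ne_zero_eval z ha hz
  hzero := fun z => pa_zero ha z
  hfac := qa_fac ha




section Main
variable {n k : ℕ} (F : Fin (k + 1) → BallFactor n)

noncomputable def tP (t : Fin (Fintype.card (Fin (k + 1) → Fin (n + 1)))) :
    MvPolynomial (Fin n) ℂ :=
  ∏ j, (F j).p ((Fintype.equivFin (Fin (k + 1) → Fin (n + 1))).symm t j)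

noncomputable def tQ : MvPolynomial (Fin n) ℂ := ∏ j, (F j).q

lemma tensor_sum (z : Fin n → ℂ) :
    ∑ t, ‖eval z (tP F t)‖ ^ 2
      = ∏ j, (‖eval z ((F j).q)‖ ^ 2 - (F j).c * (1 - ∑ i, ‖z i‖ ^ 2)) := by
  have h1 : ∀ I : Fin (k + 1) → Fin (n + 1),
      ‖eval z (∏ j, (F j).p (I j))‖ ^ 2 = ∏ j, ‖eval z ((F j).p (I j))‖ ^ 2 := by
    intro I
    rw [map_prod, norm_prod, ← Finset.prod_pow]
  calc ∑ t, ‖eval z (tP F t)‖ ^ 2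
      = ∑ I : Fin (k + 1) → Fin (n + 1), ‖eval z (∏ j, (F j).p (I j))‖ ^ 2 :=
        Equiv.sum_comp (Fintype.equivFin (Fin (k + 1) → Fin (n + 1))).symm
          (fun I => ‖eval z (∏ j, (F j).p (I j))‖ ^ 2)
    _ = ∑ I : Fin (k + 1) → Fin (n + 1), ∏ j, ‖eval z ((F j).p (I j))‖ ^ 2 :=
        Finset.sum_congr rfl fun I _ => h1 I
    _ = ∏ j, ∑ i, ‖eval z ((F j).p i)‖ ^ 2 :=
        (Fintype.prod_sum (κ := fun _ : Fin (k + 1) => Fin (n + 1))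
          (fun j i => ‖eval z ((F j).p i)‖ ^ 2)).symm
    _ = ∏ j, (‖eval z ((F j).q)‖ ^ 2 - (F j).c * (1 - ∑ i, ‖z i‖ ^ 2)) :=
        Finset.prod_congr rfl fun j _ => (F j).identity z

lemma eval_tQ (z : Fin n → ℂ) : ‖eval z (tQ F)‖ ^ 2 = ∏ j, ‖eval z ((F j).q)‖ ^ 2 := by
  rw [tQ, map_prod, norm_prod, ← Finset.prod_pow]

lemma tQ_ne (z : Fin n → ℂ) (hz : ∑ i, ‖z i‖ ^ 2 ≤ 1) : eval z (tQ F) ≠ 0 := by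
  rw [tQ, map_prod]
  exact Finset.prod_ne_zero_iff.mpr fun j _ => (F j).hq z hz

lemma factor_zero_iff (j : Fin (k + 1)) (z : Fin n → ℂ) :
    ‖eval z ((F j).q)‖ ^ 2 - (F j).c * (1 - ∑ i, ‖z i‖ ^ 2) = 0 ↔ z ∈ (F j).Z := by
  rw [← (F j).identity z, ← (F j).hzero z]
  rw [Finset.sum_eq_zero_iff_of_nonneg (fun i _ => by positivity)]
  constructor
  · intro h i
    have := h i (Finset.mem_univ i)
    have h2 : ‖eval z ((F j).p i)‖ = 0 := by nlinarith [norm_nonneg (eval z ((F j).p i))]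
    exact norm_eq_zero.mp h2
  · intro h i _
    rw [h i, norm_zero]
    norm_num

lemma tensor_zero_iff (z : Fin n → ℂ) :
    (∀ t, eval z (tP F t) = 0) ↔ ∃ j, z ∈ (F j).Z := by
  have h1 : (∀ t, eval z (tP F t) = 0) ↔ ∑ t, ‖eval z (tP F t)‖ ^ 2 = 0 := by
    rw [Finset.sum_eq_zero_iff_of_nonneg (fun t _ => by positivity)]
    constructor
    · intro h t _
      rw [h t, norm_zero]
      norm_num
    · intro h t
      have := h t (Finset.mem_univ t)
      have h2 : ‖eval z (tP F t)‖ = 0 := by nlinarith [norm_nonneg (eval z (tP F t))]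
      exact norm_eq_zero.mp h2
  rw [h1, tensor_sum]
  rw [Finset.prod_eq_zero_iff]
  constructor
  · rintro ⟨j, _, hj⟩
    exact ⟨j, (factor_zero_iff F j z).mp hj⟩
  · rintro ⟨j, hj⟩
    exact ⟨j, Finset.mem_univ j, (factor_zero_iff F j z).mpr hj⟩

lemma tensor_lt (z : Fin n → ℂ) (hz : ∑ i, ‖z i‖ ^ 2 < 1) :
    ∑ t, ‖eval z (tP F t)‖ ^ 2 < ‖eval z (tQ F)‖ ^ 2 := by
  rw [tensor_sum, eval_tQ]
  have hB : ∀ j : Fin (k + 1), 0 < ‖eval z ((F j).q)‖ ^ 2 := by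
    intro j
    exact pow_pos (norm_pos_iff.mpr ((F j).hq z (le_of_lt hz))) 2
  have hA : ∀ j : Fin (k + 1), 0 ≤ ‖eval z ((F j).q)‖ ^ 2 - (F j).c * (1 - ∑ i, ‖z i‖ ^ 2) := by
    intro j
    rw [← (F j).identity z]
    positivity
  have hAB : ∀ j : Fin (k + 1),
      ‖eval z ((F j).q)‖ ^ 2 - (F j).c * (1 - ∑ i, ‖z i‖ ^ 2) < ‖eval z ((F j).q)‖ ^ 2 := by
    intro j
    nlinarith [(F j).hc]
  by_cases h0 : ∃ j : Fin (k + 1), ‖eval z ((F j).q)‖ ^ 2 - (F j).c * (1 - ∑ i, ‖z i‖ ^ 2) = 0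
  · obtain ⟨j0, hj0⟩ := h0
    rw [Finset.prod_eq_zero (Finset.mem_univ j0) hj0]
    exact Finset.prod_pos fun j _ => hB j
  · push_neg at h0
    refine Finset.prod_lt_prod_of_nonempty ?_ (fun j _ => hAB j) Finset.univ_nonempty
    intro j _
    exact lt_of_le_of_ne (hA j) (Ne.symm (h0 j))

lemma tensor_eq (z : Fin n → ℂ) (hz : ∑ i, ‖z i‖ ^ 2 = 1) :
    ∑ t, ‖eval z (tP F t)‖ ^ 2 = ‖eval z (tQ F)‖ ^ 2 := by
  rw [tensor_sum, eval_tQ]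
  refine Finset.prod_congr rfl fun j _ => ?_
  rw [hz]
  ring

lemma tensor_lowest (r : MvPolynomial (Fin n) ℂ) (hrQ : r ∣ tQ F) (hrP : ∀ t, r ∣ tP F t) :
    r.totalDegree = 0 := by
  by_contra hdeg
  have hr0 : r ≠ 0 := by rintro rfl; exact hdeg totalDegree_zero
  have hru : ¬IsUnit r := fun h => hdeg (totalDegree_eq_zero_of_isUnit h)
  obtain ⟨s, hs_irr, hsr⟩ := WfDvdMonoid.exists_irreducible_factor hru hr0
  have hs : Prime s := UniqueFactorizationMonoid.irreducible_iff_prime.mp hs_irr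
  have hsQ : s ∣ ∏ j, (F j).q := hsr.trans hrQ
  obtain ⟨j0, _, hj0⟩ := (Prime.dvd_finset_prod_iff hs _).mp hsQ
  obtain ⟨z0, hz0s, hz0n⟩ := (F j0).hfac s hs hj0
  have hchoice : ∀ j : Fin (k + 1), ∃ i, ¬s ∣ (F j).p i := by
    intro j
    by_contra hcon
    push_neg at hcon
    have hall : ∀ i, eval z0 ((F j).p i) = 0 := by
      intro i
      obtain ⟨v, hv⟩ := hcon i
      rw [hv, map_mul, hz0s, zero_mul]
    have hid := (F j).identity z0
    rw [Finset.sum_eq_zero (fun i _ => by rw [hall i, norm_zero]; norm_num)] at hid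
    have hq2 : (0 : ℝ) ≤ ‖eval z0 ((F j).q)‖ ^ 2 := by positivity
    nlinarith [(F j).hc]
  choose I hI using hchoice
  set t0 := (Fintype.equivFin (Fin (k + 1) → Fin (n + 1))) I with ht0
  have hPt : tP F t0 = ∏ j, (F j).p (I j) := by
    rw [tP, ht0]
    simp only [Equiv.symm_apply_apply]
  have hsP : s ∣ ∏ j, (F j).p (I j) := by rw [← hPt]; exact hsr.trans (hrP t0)
  obtain ⟨j1, _, hj1⟩ := (Prime.dvd_finset_prod_iff hs _).mp hsP
  exact hI j1 hj1

end Main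
end RPBM

/-- Any finite set of points in the ball is the zero set of the numerator of some
rational proper map between balls in lowest terms. -/
theorem exists_rational_proper_with_given_zeros
    (n k : ℕ) (a : Fin k → EuclideanSpace ℂ (Fin n)) (ha : ∀ i, ‖a i‖ < 1) :
    ∃ (N : ℕ) (p : Fin N → MvPolynomial (Fin n) ℂ) (q : MvPolynomial (Fin n) ℂ),
      IsRationalProperBallMap n N p q ∧
      {z : EuclideanSpace ℂ (Fin n) | ‖z‖ < 1 ∧ ∀ i, eval (fun j => z j) (p i) = 0}
        = Set.range a := by
  classical
  set F : Fin (k + 1) → RPBM.BallFactor n :=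
    Fin.cons (RPBM.trivialFactor n) (fun j => RPBM.pointFactor (a j) (ha j)) with hF
  refine ⟨Fintype.card (Fin (k + 1) → Fin (n + 1)), RPBM.tP F, RPBM.tQ F, ⟨?_, ?_, ?_, ?_⟩, ?_⟩
  · intro z hz
    refine RPBM.tQ_ne F (fun i => z i) ?_
    rw [← RPBM.norm_sq_eq z]
    nlinarith [norm_nonneg z]
  · intro r hrQ hrP
    exact RPBM.tensor_lowest F r hrQ hrP
  · intro z hz
    refine RPBM.tensor_lt F (fun i => z i) ?_
    rw [← RPBM.norm_sq_eq z]
    nlinarith [norm_nonneg z]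
  · intro z hz
    refine RPBM.tensor_eq F (fun i => z i) ?_
    rw [← RPBM.norm_sq_eq z, hz]
    norm_num
  · ext z
    simp only [Set.mem_setOf_eq, Set.mem_range]
    constructor
    · rintro ⟨hz1, hz2⟩
      obtain ⟨j, hj⟩ := (RPBM.tensor_zero_iff F (fun i => z i)).mp hz2
      revert hj
      refine Fin.cases ?_ (fun j' => ?_) j <;> intro hj'
      · rw [hF, Fin.cons_zero] at hj'
        exact absurd hj' (Set.notMem_empty _)
      · rw [hF, Fin.cons_succ] at hj'
        have hz : (fun i => z i) = fun i => a j' i := hj'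
        exact ⟨j', (WithLp.ofLp_injective (p := 2) hz).symm⟩
    · rintro ⟨j', rfl⟩
      refine ⟨ha j', (RPBM.tensor_zero_iff F _).mpr ⟨j'.succ, ?_⟩⟩
      rw [hF, Fin.cons_succ]
      show _ = _
      rfl
end

section
/- Let p = (p_1,…,p_N) : ℂ^n → ℂ^N be a polynomial map and q a polynomial on ℂ^n such that ‖p(z)‖² = |q(z)|² for all z ∈ ℂ^n with ‖z‖ = 1. Then for all z, ζ ∈ ℂ^n with ⟨z, ζ⟩ = 1, one has ⟨p(z), p(ζ)⟩ = q(z)·conj(q(ζ)). -/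
set_option maxHeartbeats 1000000
open MvPolynomial Complex Filter Set

private lemma eqzero_of_frequently (h : ℂ → ℂ) (hh : AnalyticOnNhd ℂ h Set.univ) (x₀ : ℂ)
    (hfreq : ∃ᶠ x in nhdsWithin x₀ {x₀}ᶜ, h x = 0) : ∀ x, h x = 0 := fun x =>
  hh.eqOn_zero_of_preconnected_of_frequently_eq_zero isPreconnected_univ (Set.mem_univ x₀)
    hfreq (Set.mem_univ x)

private lemma key1 {n : ℕ} (F : (Fin n → ℂ) → (Fin n → ℂ) → ℂ)
    (hAnal : ∀ φ ψ : Fin n → ℂ → ℂ, (∀ j, AnalyticOnNhd ℂ (φ j) Set.univ) →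
      (∀ j, AnalyticOnNhd ℂ (ψ j) Set.univ) →
      AnalyticOnNhd ℂ (fun μ => F (fun j => φ j μ) (fun j => ψ j μ)) Set.univ)
    (hsph : ∀ v : Fin n → ℂ, (∑ j, ‖v j‖ ^ 2) = 1 → F v (fun j => (starRingEnd ℂ) (v j)) = 0)
    (z w : Fin n → ℂ) (hzw : ∑ j, z j * w j = 1)
    (hA : 1 < ∑ j, ‖z j‖ ^ 2) (hB : (∑ j, ‖w j‖ ^ 2) < 1) : F z w = 0 := by
  have hCS : 1 ≤ (∑ j, ‖z j‖ ^ 2) * (∑ j, ‖w j‖ ^ 2) := by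
    have h2 := norm_inner_le_norm (𝕜 := ℂ)
      (E := EuclideanSpace ℂ (Fin n)) (WithLp.toLp 2 (fun j => (starRingEnd ℂ) (z j))) (WithLp.toLp 2 (fun j => w j))
    have h1 : (inner (𝕜 := ℂ) (E := EuclideanSpace ℂ (Fin n))
        (WithLp.toLp 2 (fun j => (starRingEnd ℂ) (z j))) (WithLp.toLp 2 (fun j => w j)) : ℂ) = 1 := by
      rw [PiLp.inner_apply]
      simp only [PiLp.toLp_apply, RCLike.inner_apply, Complex.conj_conj]
      rw [← hzw]; exact Finset.sum_congr rfl fun j _ => mul_comm _ _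
    rw [h1, norm_one, EuclideanSpace.norm_eq, EuclideanSpace.norm_eq] at h2
    simp only [PiLp.toLp_apply, RCLike.norm_conj] at h2
    rw [← Real.sqrt_mul (show (0:ℝ) ≤ ∑ j, ‖z j‖ ^ 2 by positivity)] at h2
    nlinarith [Real.sq_sqrt (show (0:ℝ) ≤ (∑ j, ‖z j‖ ^ 2) * (∑ j, ‖w j‖ ^ 2) by positivity), h2,
      Real.sqrt_nonneg ((∑ j, ‖z j‖ ^ 2) * (∑ j, ‖w j‖ ^ 2))]
  set A : ℝ := ∑ j, ‖z j‖ ^ 2 with hAdef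
  set B : ℝ := ∑ j, ‖w j‖ ^ 2 with hBdef
  have hAB2 : 2 < A + B := by nlinarith
  have hB1 : (0:ℝ) < 1 - B := by linarith
  set ρ : ℝ := (A - 1) / (1 - B) with hrhodef
  have hρ1 : 1 < ρ := (one_lt_div hB1).2 (by linarith)
  have hρpos : 0 < ρ := by linarith
  have hkey : ρ * (1 - B) = A - 1 := div_mul_cancel₀ _ (ne_of_gt hB1)
  set t : ℝ := Real.sqrt ρ with htdef
  have htpos : 0 < t := Real.sqrt_pos.2 hρpos
  have ht2 : t * t = ρ := Real.mul_self_sqrt hρpos.le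
  -- complex versions
  set r : ℂ := (ρ : ℂ) with hrdef
  set s : ℂ := (t : ℂ) with hsdef
  have hr1 : r - 1 ≠ 0 := by
    rw [hrdef, ← Complex.ofReal_one, ← Complex.ofReal_sub]
    exact Complex.ofReal_ne_zero.2 (by linarith)
  have hs0 : s ≠ 0 := by
    rw [hsdef]; exact Complex.ofReal_ne_zero.2 (ne_of_gt htpos)
  have hs2 : s * s = r := by
    rw [hsdef, hrdef, ← Complex.ofReal_mul, ht2]
  have hkeyC : r * (1 - (B : ℂ)) = (A : ℂ) - 1 := by
    rw [hrdef]
    exact_mod_cast congrArg Complex.ofReal hkey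
  -- base sums
  have hZc : ∑ j, z j * (starRingEnd ℂ) (z j) = (A : ℂ) := by
    rw [hAdef]
    push_cast
    exact Finset.sum_congr rfl fun j _ => Complex.mul_conj' (z j)
  have hWc : ∑ j, (starRingEnd ℂ) (w j) * w j = (B : ℂ) := by
    rw [hBdef]
    push_cast
    exact Finset.sum_congr rfl fun j _ => by rw [mul_comm]; exact Complex.mul_conj' (w j)
  have hSc : ∑ j, (starRingEnd ℂ) (z j) * (starRingEnd ℂ) (w j) = 1 := by
    have := congrArg (starRingEnd ℂ) hzw
    simpa [map_sum] using this
  set a : Fin n → ℂ := fun j => s * (z j - (starRingEnd ℂ) (w j)) / (r - 1) with hadef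
  set c : Fin n → ℂ := fun j => (r * (starRingEnd ℂ) (w j) - z j) / (r - 1) with hcdef
  have hconj_r : (starRingEnd ℂ) r = r := by rw [hrdef]; exact Complex.conj_ofReal ρ
  have hconj_s : (starRingEnd ℂ) s = s := by rw [hsdef]; exact Complex.conj_ofReal t
  have hca : ∀ j, (starRingEnd ℂ) (a j) = s * ((starRingEnd ℂ) (z j) - w j) / (r - 1) := by
    intro j
    simp only [hadef, map_div₀, map_mul, map_sub, map_one, hconj_r, hconj_s, Complex.conj_conj]
  have hcc : ∀ j, (starRingEnd ℂ) (c j) = (r * w j - (starRingEnd ℂ) (z j)) / (r - 1) := by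
    intro j
    simp only [hcdef, map_div₀, map_mul, map_sub, map_one, hconj_r, hconj_s, Complex.conj_conj]
  have hSac : ∑ j, a j * (starRingEnd ℂ) (c j) = 0 := by
    have e1 : ∀ j, a j * (starRingEnd ℂ) (c j) =
        (s / ((r-1)*(r-1))) * (r * (z j * w j)) - (s / ((r-1)*(r-1))) * (z j * (starRingEnd ℂ) (z j))
        - (s / ((r-1)*(r-1))) * (r * ((starRingEnd ℂ) (w j) * w j))
        + (s / ((r-1)*(r-1))) * ((starRingEnd ℂ) (z j) * (starRingEnd ℂ) (w j)) := by
      intro j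
      rw [hcc j, hadef]
      field_simp
      ring
    rw [Finset.sum_congr rfl fun j _ => e1 j]
    simp only [Finset.sum_add_distrib, Finset.sum_sub_distrib, ← Finset.mul_sum]
    rw [hzw, hZc, hWc, hSc]
    field_simp
    linear_combination s * hkeyC
  have hSca : ∑ j, c j * (starRingEnd ℂ) (a j) = 0 := by
    have h0 := congrArg (starRingEnd ℂ) hSac
    simp only [map_sum, map_mul, map_zero, Complex.conj_conj] at h0
    rw [← h0]
    exact Finset.sum_congr rfl fun j _ => mul_comm _ _
  have hSaa : ∑ j, a j * (starRingEnd ℂ) (a j)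
      = (s * s / ((r-1)*(r-1))) * ((A:ℂ) + (B:ℂ) - 1 - 1) := by
    have e2 : ∀ j, a j * (starRingEnd ℂ) (a j) =
        (s * s / ((r-1)*(r-1))) * (z j * (starRingEnd ℂ) (z j))
        - (s * s / ((r-1)*(r-1))) * (z j * w j)
        - (s * s / ((r-1)*(r-1))) * ((starRingEnd ℂ) (z j) * (starRingEnd ℂ) (w j))
        + (s * s / ((r-1)*(r-1))) * ((starRingEnd ℂ) (w j) * w j) := by
      intro j
      rw [hca j, hadef]
      field_simp
      ring
    rw [Finset.sum_congr rfl fun j _ => e2 j]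
    simp only [Finset.sum_add_distrib, Finset.sum_sub_distrib, ← Finset.mul_sum]
    rw [hzw, hZc, hWc, hSc]
    ring
  have hScc : ∑ j, c j * (starRingEnd ℂ) (c j)
      = (1 / ((r-1)*(r-1))) * (r * r * (B:ℂ) - 2 * r + (A:ℂ)) := by
    have e3 : ∀ j, c j * (starRingEnd ℂ) (c j) =
        (r * r / ((r-1)*(r-1))) * ((starRingEnd ℂ) (w j) * w j)
        - (r / ((r-1)*(r-1))) * ((starRingEnd ℂ) (z j) * (starRingEnd ℂ) (w j))
        - (r / ((r-1)*(r-1))) * (z j * w j)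
        + (1 / ((r-1)*(r-1))) * (z j * (starRingEnd ℂ) (z j)) := by
      intro j
      rw [hcc j, hcdef]
      field_simp
      ring
    rw [Finset.sum_congr rfl fun j _ => e3 j]
    simp only [Finset.sum_add_distrib, Finset.sum_sub_distrib, ← Finset.mul_sum]
    rw [hzw, hZc, hWc, hSc]
    ring
  have hSum1 : (∑ j, a j * (starRingEnd ℂ) (a j)) + (∑ j, c j * (starRingEnd ℂ) (c j)) = 1 := by
    rw [hSaa, hScc, div_mul_eq_mul_div, div_mul_eq_mul_div, one_mul, ← add_div,
      div_eq_one_iff_eq (mul_ne_zero hr1 hr1)]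
    linear_combination ((A:ℂ) + (B:ℂ) - 2) * hs2 - (r+1) * hkeyC
  have hMaster : ∀ E E' : ℂ, E * E' = 1 →
      ∑ j, (a j * E + c j) * ((starRingEnd ℂ) (a j) * E' + (starRingEnd ℂ) (c j)) = 1 := by
    intro E E' hEE
    have expand : ∀ j, (a j * E + c j) * ((starRingEnd ℂ) (a j) * E' + (starRingEnd ℂ) (c j))
        = (E * E') * (a j * (starRingEnd ℂ) (a j)) + E * (a j * (starRingEnd ℂ) (c j))
          + E' * (c j * (starRingEnd ℂ) (a j)) + c j * (starRingEnd ℂ) (c j) := fun j => by ring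
    rw [Finset.sum_congr rfl fun j _ => expand j]
    simp only [Finset.sum_add_distrib, ← Finset.mul_sum]
    rw [hSac, hSca, hEE]
    rw [one_mul, mul_zero, mul_zero, add_zero, add_zero]
    exact hSum1
  -- the analytic curve
  set h : ℂ → ℂ := fun μ => F (fun j => a j * Complex.exp μ + c j)
      (fun j => (starRingEnd ℂ) (a j) * Complex.exp (-μ) + (starRingEnd ℂ) (c j)) with hhdef
  have hanal : AnalyticOnNhd ℂ h Set.univ := by
    rw [hhdef]
    exact hAnal _ _
      (fun j => (analyticOnNhd_const.mul analyticOnNhd_cexp).add analyticOnNhd_const)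
      (fun j => (analyticOnNhd_const.mul
        (analyticOnNhd_cexp.comp (analyticOnNhd_id.neg) (Set.mapsTo_univ _ _))).add
        analyticOnNhd_const)
  have hvanish : ∀ y : ℝ, h ((y : ℂ) * Complex.I) = 0 := by
    intro y
    have hec : Complex.exp (-((y:ℂ) * Complex.I)) = (starRingEnd ℂ) (Complex.exp ((y:ℂ) * Complex.I)) := by
      rw [← Complex.exp_conj]
      congr 1
      simp [map_mul, Complex.conj_ofReal, Complex.conj_I]
    have hm := hMaster (Complex.exp ((y:ℂ) * Complex.I)) (Complex.exp (-((y:ℂ) * Complex.I)))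
      (by rw [← Complex.exp_add]; simp)
    have hnorm : ∑ j, ‖a j * Complex.exp ((y:ℂ) * Complex.I) + c j‖ ^ 2 = 1 := by
      have hcast : ((∑ j, ‖a j * Complex.exp ((y:ℂ) * Complex.I) + c j‖ ^ 2 : ℝ) : ℂ) = 1 := by
        push_cast
        rw [← hm]
        refine Finset.sum_congr rfl fun j _ => ?_
        rw [← Complex.mul_conj']
        congr 1
        rw [map_add, map_mul, ← hec]
      exact_mod_cast hcast
    have hres := hsph (fun j => a j * Complex.exp ((y:ℂ) * Complex.I) + c j) hnorm
    have hfun : (fun j => (starRingEnd ℂ) (a j) * Complex.exp (-((y:ℂ) * Complex.I))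
          + (starRingEnd ℂ) (c j))
        = (fun j => (starRingEnd ℂ) (a j * Complex.exp ((y:ℂ) * Complex.I) + c j)) := by
      funext j
      rw [map_add, map_mul, ← hec]
    show F (fun j => a j * Complex.exp ((y:ℂ) * Complex.I) + c j)
      (fun j => (starRingEnd ℂ) (a j) * Complex.exp (-((y:ℂ) * Complex.I))
        + (starRingEnd ℂ) (c j)) = 0
    rw [hfun]
    exact hres
  have hfreq : ∃ᶠ x in nhdsWithin 0 {(0:ℂ)}ᶜ, h x = 0 := by
    have htend : Filter.Tendsto (fun k : ℕ => ((1 / (k + 1) : ℝ) : ℂ) * Complex.I) Filter.atTop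
        (nhdsWithin 0 {(0:ℂ)}ᶜ) := by
      apply tendsto_nhdsWithin_of_tendsto_nhds_of_eventually_within
      · have h1 : Filter.Tendsto (fun k : ℕ => ((1 / (k + 1) : ℝ) : ℂ)) Filter.atTop (nhds 0) := by
          have := tendsto_one_div_add_atTop_nhds_zero_nat (𝕜 := ℝ)
          have h2 := (Complex.continuous_ofReal.tendsto 0).comp this
          simpa [Function.comp_def] using h2
        have h3 := h1.mul_const Complex.I
        simpa using h3
      · filter_upwards with k
        simp only [Set.mem_compl_iff, Set.mem_singleton_iff]
        intro hcontra
        have : ((1 / (k + 1) : ℝ) : ℂ) = 0 := by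
          have := congrArg (fun x => x * Complex.I⁻¹) hcontra
          simpa [mul_assoc, Complex.I_ne_zero] using this
        rw [Complex.ofReal_eq_zero] at this
        have : (0:ℝ) < 1 / (k + 1) := by positivity
        simp_all
    exact htend.frequently (Filter.Frequently.of_forall fun k => hvanish _)
  have hzero := eqzero_of_frequently h hanal 0 hfreq
  have hfinal := hzero ((Real.log t : ℝ) : ℂ)
  have he1 : Complex.exp ((Real.log t : ℝ) : ℂ) = s := by
    rw [← Complex.ofReal_exp, Real.exp_log htpos, hsdef]
  have he2 : Complex.exp (-((Real.log t : ℝ) : ℂ)) = s⁻¹ := by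
    rw [Complex.exp_neg, he1]
  have hfz : (fun j => a j * s + c j) = z := by
    funext j
    rw [hadef, hcdef]
    field_simp
    linear_combination (z j - (starRingEnd ℂ) (w j)) * hs2
  have hgw : (fun j => (starRingEnd ℂ) (a j) * s⁻¹ + (starRingEnd ℂ) (c j)) = w := by
    funext j
    rw [hca j, hcc j]
    field_simp
    ring
  rw [hhdef] at hfinal
  simp only [he1, he2] at hfinal
  rwa [hfz, hgw] at hfinal

private lemma key2 {n : ℕ} (F : (Fin n → ℂ) → (Fin n → ℂ) → ℂ)
    (hAnal : ∀ φ ψ : Fin n → ℂ → ℂ, (∀ j, AnalyticOnNhd ℂ (φ j) Set.univ) →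
      (∀ j, AnalyticOnNhd ℂ (ψ j) Set.univ) →
      AnalyticOnNhd ℂ (fun μ => F (fun j => φ j μ) (fun j => ψ j μ)) Set.univ)
    (hsph : ∀ v : Fin n → ℂ, (∑ j, ‖v j‖ ^ 2) = 1 → F v (fun j => (starRingEnd ℂ) (v j)) = 0)
    (z w : Fin n → ℂ) (hzw : ∑ j, z j * w j = 1)
    (hA : 1 < ∑ j, ‖z j‖ ^ 2) : F z w = 0 := by
  set A : ℝ := ∑ j, ‖z j‖ ^ 2 with hAdef
  have hA0 : (A:ℂ) ≠ 0 := by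
    rw [Complex.ofReal_ne_zero]; positivity
  set w₀ : Fin n → ℂ := fun j => (starRingEnd ℂ) (z j) / (A : ℂ) with hw₀def
  have hw₀sum : ∑ j, z j * w₀ j = 1 := by
    rw [hw₀def]
    have : ∀ j, z j * ((starRingEnd ℂ) (z j) / (A:ℂ)) = z j * (starRingEnd ℂ) (z j) / (A:ℂ) :=
      fun j => by ring
    rw [Finset.sum_congr rfl fun j _ => this j, ← Finset.sum_div]
    rw [show ∑ j, z j * (starRingEnd ℂ) (z j) = ((A:ℝ):ℂ) by
      rw [hAdef]; push_cast; exact Finset.sum_congr rfl fun j _ => Complex.mul_conj' (z j)]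
    exact div_self hA0
  have hw₀norm : ∑ j, ‖w₀ j‖ ^ 2 = 1 / A := by
    rw [hw₀def]
    have : ∀ j, ‖(starRingEnd ℂ) (z j) / (A:ℂ)‖ ^ 2 = ‖z j‖ ^ 2 / A ^ 2 := fun j => by
      rw [norm_div, div_pow, RCLike.norm_conj, Complex.norm_real, Real.norm_eq_abs,
        abs_of_pos (by positivity : (0:ℝ) < A)]
    rw [Finset.sum_congr rfl fun j _ => this j, ← Finset.sum_div, ← hAdef]
    field_simp
  set h : ℂ → ℂ := fun μ => F z (fun j => w₀ j + μ * (w j - w₀ j)) with hhdef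
  have hanal : AnalyticOnNhd ℂ h Set.univ := by
    rw [hhdef]
    exact hAnal _ _ (fun j => analyticOnNhd_const)
      (fun j => analyticOnNhd_const.add (analyticOnNhd_id.mul analyticOnNhd_const))
  have hcont : Continuous fun μ : ℂ => ∑ j, ‖w₀ j + μ * (w j - w₀ j)‖ ^ 2 := by
    refine continuous_finset_sum _ fun j _ => ?_
    have : Continuous fun μ : ℂ => w₀ j + μ * (w j - w₀ j) := by continuity
    exact (this.norm).pow 2
  have hs : IsOpen {μ : ℂ | ∑ j, ‖w₀ j + μ * (w j - w₀ j)‖ ^ 2 < 1} :=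
    isOpen_lt hcont continuous_const
  have h0mem : (0:ℂ) ∈ {μ : ℂ | ∑ j, ‖w₀ j + μ * (w j - w₀ j)‖ ^ 2 < 1} := by
    simp only [Set.mem_setOf_eq, zero_mul, add_zero]
    rw [hw₀norm]
    rw [div_lt_one (by positivity : (0:ℝ) < A)]
    linarith
  have hvanish : ∀ μ ∈ {μ : ℂ | ∑ j, ‖w₀ j + μ * (w j - w₀ j)‖ ^ 2 < 1}, h μ = 0 := by
    intro μ hμ
    rw [hhdef]
    refine key1 F hAnal hsph z _ ?_ hA hμ
    have : ∀ j, z j * (w₀ j + μ * (w j - w₀ j))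
        = z j * w₀ j + μ * (z j * w j) - μ * (z j * w₀ j) := fun j => by ring
    rw [Finset.sum_congr rfl fun j _ => this j]
    simp only [Finset.sum_sub_distrib, Finset.sum_add_distrib, ← Finset.mul_sum]
    rw [hw₀sum, hzw]
    ring
  have hfreq : ∃ᶠ x in nhdsWithin 0 {(0:ℂ)}ᶜ, h x = 0 := by
    have hev : ∀ᶠ x in nhds (0:ℂ), h x = 0 := by
      filter_upwards [hs.mem_nhds h0mem] with x hx using hvanish x hx
    exact (hev.filter_mono nhdsWithin_le_nhds).frequently
  have hzero := eqzero_of_frequently h hanal 0 hfreq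
  have hfinal := hzero 1
  rw [hhdef] at hfinal
  simp only [one_mul] at hfinal
  have : (fun j => w₀ j + (w j - w₀ j)) = w := by funext j; ring
  rwa [this] at hfinal

private lemma key3 {n : ℕ} (F : (Fin n → ℂ) → (Fin n → ℂ) → ℂ)
    (hAnal : ∀ φ ψ : Fin n → ℂ → ℂ, (∀ j, AnalyticOnNhd ℂ (φ j) Set.univ) →
      (∀ j, AnalyticOnNhd ℂ (ψ j) Set.univ) →
      AnalyticOnNhd ℂ (fun μ => F (fun j => φ j μ) (fun j => ψ j μ)) Set.univ)
    (hsph : ∀ v : Fin n → ℂ, (∑ j, ‖v j‖ ^ 2) = 1 → F v (fun j => (starRingEnd ℂ) (v j)) = 0)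
    (z w : Fin n → ℂ) (hzw : ∑ j, z j * w j = 1) : F z w = 0 := by
  set A : ℝ := ∑ j, ‖z j‖ ^ 2 with hAdef
  have hApos : 0 < A := by
    rcases lt_or_eq_of_le (show (0:ℝ) ≤ A from by positivity) with h | h
    · exact h
    · exfalso
      have hz : ∀ j, z j = 0 := by
        intro j
        have hmem : j ∈ Finset.univ := Finset.mem_univ j
        have := (Finset.sum_eq_zero_iff_of_nonneg
          (fun j _ => by positivity : ∀ j ∈ Finset.univ, (0:ℝ) ≤ ‖z j‖ ^ 2)).1 h.symm j hmem
        simpa using this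
      rw [Finset.sum_congr rfl fun j _ => by rw [hz j, zero_mul]] at hzw
      simp at hzw
  set R₀ : ℝ := -Real.log A / 2 with hR₀def
  set h : ℂ → ℂ := fun μ => F (fun j => Complex.exp μ * z j) (fun j => Complex.exp (-μ) * w j)
    with hhdef
  have hanal : AnalyticOnNhd ℂ h Set.univ := by
    rw [hhdef]
    exact hAnal _ _
      (fun j => analyticOnNhd_cexp.mul analyticOnNhd_const)
      (fun j => ((analyticOnNhd_cexp.comp (analyticOnNhd_id.neg)
        (Set.mapsTo_univ _ _)).mul analyticOnNhd_const))
  have hvanish : ∀ μ : ℂ, R₀ < μ.re → h μ = 0 := by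
    intro μ hμ
    rw [hhdef]
    refine key2 F hAnal hsph _ _ ?_ ?_
    · have : ∀ j, (Complex.exp μ * z j) * (Complex.exp (-μ) * w j) = z j * w j := fun j => by
        rw [mul_mul_mul_comm, ← Complex.exp_add, add_neg_cancel, Complex.exp_zero, one_mul]
      rw [Finset.sum_congr rfl fun j _ => this j]
      exact hzw
    · have hterm : ∀ j, ‖Complex.exp μ * z j‖ ^ 2 = Real.exp μ.re ^ 2 * ‖z j‖ ^ 2 := fun j => by
        rw [norm_mul, mul_pow, Complex.norm_exp]
      rw [Finset.sum_congr rfl fun j _ => hterm j, ← Finset.mul_sum, ← hAdef]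
      have h1 : Real.exp μ.re ^ 2 * A = Real.exp (2 * μ.re + Real.log A) := by
        rw [Real.exp_add, show (2:ℝ) * μ.re = μ.re + μ.re by ring, Real.exp_add,
          Real.exp_log hApos]
        ring
      rw [h1]
      have h2 : (0:ℝ) < 2 * μ.re + Real.log A := by
        rw [hR₀def] at hμ
        linarith
      calc (1:ℝ) = Real.exp 0 := (Real.exp_zero).symm
        _ < Real.exp (2 * μ.re + Real.log A) := Real.exp_lt_exp.2 h2
  have hsopen : IsOpen {μ : ℂ | R₀ < μ.re} := isOpen_lt continuous_const Complex.continuous_re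
  have hmem : ((R₀ + 1 : ℝ) : ℂ) ∈ {μ : ℂ | R₀ < μ.re} := by
    simp only [Set.mem_setOf_eq, Complex.ofReal_re]
    linarith
  have hfreq : ∃ᶠ x in nhdsWithin ((R₀ + 1 : ℝ) : ℂ) {((R₀ + 1 : ℝ) : ℂ)}ᶜ, h x = 0 := by
    have hev : ∀ᶠ x in nhds ((R₀ + 1 : ℝ) : ℂ), h x = 0 := by
      filter_upwards [hsopen.mem_nhds hmem] with x hx using hvanish x hx
    exact (hev.filter_mono nhdsWithin_le_nhds).frequently
  have hzero := eqzero_of_frequently h hanal _ hfreq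
  have hfinal := hzero 0
  rw [hhdef] at hfinal
  simp only [neg_zero, Complex.exp_zero, one_mul] at hfinal
  exact hfinal

private lemma evalAnalytic {n : ℕ} (P : MvPolynomial (Fin n) ℂ) (φ : Fin n → ℂ → ℂ)
    (hφ : ∀ j, AnalyticOnNhd ℂ (φ j) Set.univ) :
    AnalyticOnNhd ℂ (fun x => eval (fun j => φ j x) P) Set.univ := by
  induction P using MvPolynomial.induction_on with
  | C a => simpa using analyticOnNhd_const
  | add p q hp hq => simp only [map_add]; exact fun x hx => (hp x hx).fun_add (hq x hx)
  | mul_X p j hp => simpa using hp.mul (hφ j)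

private lemma conj_eval {n : ℕ} (P : MvPolynomial (Fin n) ℂ) (ζ : Fin n → ℂ) :
    (starRingEnd ℂ) (eval ζ P)
      = eval (fun j => (starRingEnd ℂ) (ζ j)) (map (starRingEnd ℂ) P) := by
  rw [eval_map, ← eval₂_id P (g := ζ), eval₂_comp_left (starRingEnd ℂ)]
  rfl

/-- Polarization: if `‖p(z)‖² = |q(z)|²` on the unit sphere, then
`⟨p(z), p(ζ)⟩ = q(z) conj(q(ζ))` whenever `⟨z, ζ⟩ = 1`. -/
theorem polarization_on_sphere
    (n N : ℕ) (p : Fin N → MvPolynomial (Fin n) ℂ) (q : MvPolynomial (Fin n) ℂ)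
    (hsphere : ∀ z : EuclideanSpace ℂ (Fin n), ‖z‖ = 1 →
      ∑ i, ‖eval (fun j => z j) (p i)‖ ^ 2 = ‖eval (fun j => z j) q‖ ^ 2) :
    ∀ z ζ : Fin n → ℂ, (∑ j, z j * (starRingEnd ℂ) (ζ j)) = 1 →
      ∑ i, eval z (p i) * (starRingEnd ℂ) (eval ζ (p i)) =
        eval z q * (starRingEnd ℂ) (eval ζ q) := by
  intro z ζ hzζ
  set F : (Fin n → ℂ) → (Fin n → ℂ) → ℂ := fun u v =>
    (∑ i, eval u (p i) * eval v (map (starRingEnd ℂ) (p i)))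
      - eval u q * eval v (map (starRingEnd ℂ) q) with hFdef
  have hAnal : ∀ φ ψ : Fin n → ℂ → ℂ, (∀ j, AnalyticOnNhd ℂ (φ j) Set.univ) →
      (∀ j, AnalyticOnNhd ℂ (ψ j) Set.univ) →
      AnalyticOnNhd ℂ (fun μ => F (fun j => φ j μ) (fun j => ψ j μ)) Set.univ := by
    intro φ ψ hφ hψ
    rw [hFdef]
    exact (Finset.analyticOnNhd_fun_sum _ (fun i _ =>
        (evalAnalytic (p i) φ hφ).mul (evalAnalytic (map (starRingEnd ℂ) (p i)) ψ hψ))).sub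
      ((evalAnalytic q φ hφ).mul (evalAnalytic (map (starRingEnd ℂ) q) ψ hψ))
  have hsph : ∀ v : Fin n → ℂ, (∑ j, ‖v j‖ ^ 2) = 1
      → F v (fun j => (starRingEnd ℂ) (v j)) = 0 := by
    intro v hv
    have hs : ∑ i, ‖eval (fun j => v j) (p i)‖ ^ 2 = ‖eval (fun j => v j) q‖ ^ 2 := by
      refine hsphere (WithLp.toLp 2 v) ?_
      rw [EuclideanSpace.norm_eq]
      simp only [PiLp.toLp_apply]
      rw [show ∑ j, ‖v j‖ ^ 2 = (1:ℝ) from hv]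
      exact Real.sqrt_one
    rw [hFdef]
    have h1 : ∀ P : MvPolynomial (Fin n) ℂ,
        eval (fun j => (starRingEnd ℂ) (v j)) (map (starRingEnd ℂ) P)
          = (starRingEnd ℂ) (eval v P) := fun P => (conj_eval P v).symm
    simp only [h1]
    have h2 : ∀ P : MvPolynomial (Fin n) ℂ,
        eval v P * (starRingEnd ℂ) (eval v P) = ((‖eval v P‖ ^ 2 : ℝ) : ℂ) := fun P =>
      by rw [Complex.mul_conj']; norm_cast
    simp only [h2]
    rw [← Complex.ofReal_sum]
    rw [show ∑ i, ‖eval v (p i)‖ ^ 2 = ‖eval v q‖ ^ 2 from hs]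
    simp
  have hkey := key3 F hAnal hsph z (fun j => (starRingEnd ℂ) (ζ j)) hzζ
  rw [hFdef, sub_eq_zero] at hkey
  have h3 : ∀ P : MvPolynomial (Fin n) ℂ,
      eval (fun j => (starRingEnd ℂ) (ζ j)) (map (starRingEnd ℂ) P)
        = (starRingEnd ℂ) (eval ζ P) := fun P => (conj_eval P ζ).symm
  simp only [h3] at hkey
  exact hkey
end

section
/- Fix integers n ≥ 1 and d ≥ 1. Let p : ℂ^n → ℂ^N and p′ : ℂ^n → ℂ^{N′} be polynomial maps of degree at most d with p(0) = 0 and p′(0) = 0, such that ‖p(z)‖ = 1 and ‖p′(z)‖ = 1 for all z with ‖z‖ = 1. Let T_{d−1}p and T_{d−1}p′ denote the sums of the homogeneous terms of p and p′ of degree at most d−1. If ‖(T_{d−1}p)(z)‖² = ‖(T_{d−1}p′)(z)‖² for all z ∈ ℂ^n, then ‖p(z)‖² = ‖p′(z)‖² for all z ∈ ℂ^n. (The (d−1)-jet at the origin of an origin-preserving proper polynomial map of degree at most d determines the map up to norm equivalence.) -/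
open MvPolynomial

section Aux

open Finset

private lemma circle_infinite' : Set.Infinite {l : ℂ | ‖l‖ = 1} := by
  apply Set.infinite_of_injective_forall_mem
    (f := fun t : ℝ => Complex.exp ((Real.arctan t) * Complex.I))
  case hi =>
    intro s t hst
    simp only [Complex.exp_eq_exp_iff_exists_int] at hst
    obtain ⟨k, hk⟩ := hst
    have hs := Real.arctan_lt_pi_div_two s
    have hs' := Real.neg_pi_div_two_lt_arctan s
    have ht := Real.arctan_lt_pi_div_two t
    have ht' := Real.neg_pi_div_two_lt_arctan t
    have hIm : Real.arctan s = Real.arctan t + k * (2 * Real.pi) := by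
      have := congrArg Complex.im hk
      simp only [Complex.mul_im, Complex.add_im, Complex.ofReal_im, Complex.ofReal_re,
        Complex.I_im, Complex.I_re, Complex.intCast_im, Complex.intCast_re, Complex.mul_re,
        Complex.re_ofNat, Complex.im_ofNat,
        mul_zero, mul_one, zero_mul, add_zero, zero_add, sub_zero] at this
      linarith [this]
    have hk0 : k = 0 := by
      rcases lt_trichotomy k 0 with h | h | h
      · exfalso
        have hk1 : (k:ℝ) ≤ -1 := by exact_mod_cast (by omega : (k:ℤ) ≤ -1)
        nlinarith [Real.pi_pos]
      · exact h
      · exfalso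
        have hk1 : (1:ℝ) ≤ (k:ℝ) := by exact_mod_cast (by omega : (1:ℤ) ≤ k)
        nlinarith [Real.pi_pos]
    rw [hk0] at hIm
    simp at hIm
    exact hIm
  case hf =>
    intro t
    exact Complex.norm_exp_ofReal_mul_I _

private lemma circle_coeffs' {D : ℕ} (c : ℕ → ℕ → ℂ)
    (h : ∀ l : ℂ, ‖l‖ = 1 →
      ∑ j ∈ range D, ∑ k ∈ range D, c j k * l ^ j * (starRingEnd ℂ l) ^ k = 0) :
    ∀ s : ℕ, ∑ j ∈ range D, ∑ k ∈ range D,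
      (if D + j = s + k then c j k else 0) = 0 := by
  set P : Polynomial ℂ :=
    ∑ j ∈ range D, ∑ k ∈ range D, Polynomial.C (c j k) * Polynomial.X ^ (D + j - k) with hP
  have hroot : ∀ l : ℂ, ‖l‖ = 1 → P.eval l = 0 := by
    intro l hl
    have hl0 : l ≠ 0 := by
      intro h0; rw [h0] at hl; simp at hl
    have hconj : (starRingEnd ℂ) l = l⁻¹ := by
      have h1 : l * (starRingEnd ℂ) l = 1 := by
        rw [Complex.mul_conj, Complex.normSq_eq_norm_sq, hl]; norm_num
      exact eq_inv_of_mul_eq_one_right h1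
    have : P.eval l = l ^ D * ∑ j ∈ range D, ∑ k ∈ range D,
        c j k * l ^ j * (starRingEnd ℂ l) ^ k := by
      rw [hP]
      simp only [Polynomial.eval_finset_sum, Polynomial.eval_mul, Polynomial.eval_C,
        Polynomial.eval_pow, Polynomial.eval_X, Finset.mul_sum]
      refine Finset.sum_congr rfl fun j hj => Finset.sum_congr rfl fun k hk => ?_
      have hk' : k ≤ D + j := le_trans (le_of_lt (mem_range.mp hk)) (Nat.le_add_right _ _)
      have hpow : l ^ (D + j - k) * l ^ k = l ^ (D + j) := pow_sub_mul_pow l hk'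
      rw [hconj, inv_pow]
      have hkey : l ^ (D + j - k) = l ^ (D + j) * (l ^ k)⁻¹ := by
        rw [eq_mul_inv_iff_mul_eq₀ (pow_ne_zero _ hl0)]
        exact hpow
      rw [hkey, pow_add]
      ring
    rw [this, h l hl, mul_zero]
  have hP0 : P = 0 :=
    Polynomial.eq_zero_of_infinite_isRoot P (circle_infinite'.mono (fun l hl => hroot l hl))
  intro s
  have hc : P.coeff s = 0 := by rw [hP0]; simp
  rw [hP] at hc
  simp only [Polynomial.finset_sum_coeff, Polynomial.coeff_C_mul, Polynomial.coeff_X_pow,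
    mul_ite, mul_one, mul_zero] at hc
  refine Eq.trans ?_ hc
  refine Finset.sum_congr rfl fun j hj => Finset.sum_congr rfl fun k hk => ?_
  have hk' : k < D := mem_range.mp hk
  by_cases hcond : D + j = s + k
  · rw [if_pos hcond, if_pos (by omega)]
  · rw [if_neg hcond, if_neg (show ¬ s = D + j - k by omega)]

private lemma all_coeffs_zero' {D : ℕ} (c : ℕ → ℕ → ℂ)
    (h : ∀ l : ℂ,
      ∑ j ∈ range D, ∑ k ∈ range D, c j k * l ^ j * (starRingEnd ℂ l) ^ k = 0) :
    ∀ j k, j < D → k < D → c j k = 0 := by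
  have hrad : ∀ (r : ℝ) (s : ℕ), ∑ j ∈ range D, ∑ k ∈ range D,
      (if D + j = s + k then c j k * (r : ℂ) ^ (j + k) else 0) = 0 := by
    intro r s
    have := circle_coeffs' (fun j k => c j k * (r : ℂ) ^ (j + k)) (fun l hl => by
      have hh := h ((r : ℂ) * l)
      calc ∑ j ∈ range D, ∑ k ∈ range D,
            c j k * (r:ℂ) ^ (j+k) * l ^ j * (starRingEnd ℂ l) ^ k
          = ∑ j ∈ range D, ∑ k ∈ range D,
            c j k * ((r:ℂ)*l) ^ j * (starRingEnd ℂ ((r:ℂ)*l)) ^ k := by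
            refine Finset.sum_congr rfl fun j _ => Finset.sum_congr rfl fun k _ => ?_
            rw [map_mul, Complex.conj_ofReal, mul_pow, mul_pow, pow_add]
            ring
        _ = 0 := hh) s
    exact this
  intro j₀ k₀ hj₀ hk₀
  set s : ℕ := D + j₀ - k₀ with hs
  set Q : Polynomial ℂ := ∑ j ∈ range D, ∑ k ∈ range D,
      (if D + j = s + k then Polynomial.C (c j k) * Polynomial.X ^ (j + k) else 0) with hQ
  have hQroot : ∀ r : ℝ, Q.eval (r : ℂ) = 0 := by
    intro r
    rw [hQ]
    simp only [Polynomial.eval_finset_sum]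
    rw [← hrad r s]
    refine Finset.sum_congr rfl fun j _ => Finset.sum_congr rfl fun k _ => ?_
    by_cases hcond : D + j = s + k
    · rw [if_pos hcond, if_pos hcond]; simp
    · rw [if_neg hcond, if_neg hcond]; simp
  have hQ0 : Q = 0 := by
    apply Polynomial.eq_zero_of_infinite_isRoot
    apply Set.Infinite.mono (s := Set.range (fun r : ℝ => (r : ℂ)))
    · rintro x ⟨r, rfl⟩; exact hQroot r
    · exact Set.infinite_range_of_injective Complex.ofReal_injective
  have hcoeff : Q.coeff (j₀ + k₀) = 0 := by rw [hQ0]; simp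
  rw [hQ] at hcoeff
  simp only [Polynomial.finset_sum_coeff,
    apply_ite (fun q : Polynomial ℂ => Polynomial.coeff q (j₀ + k₀)),
    Polynomial.coeff_C_mul, Polynomial.coeff_X_pow, Polynomial.coeff_zero,
    mul_ite, mul_one, mul_zero] at hcoeff
  rw [← hcoeff]
  symm
  rw [Finset.sum_eq_single j₀]
  · rw [Finset.sum_eq_single k₀]
    · rw [if_pos (by omega : D + j₀ = s + k₀), if_pos rfl]
    · intro k hk hne
      by_cases h1 : D + j₀ = s + k
      · rw [if_pos h1, if_neg (by omega)]
      · rw [if_neg h1]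
    · intro habs; exact absurd (Finset.mem_range.mpr hk₀) habs
  · intro j hj hne
    apply Finset.sum_eq_zero
    intro k hk
    have hkD : k < D := Finset.mem_range.mp hk
    by_cases h1 : D + j = s + k
    · rw [if_pos h1, if_neg (by omega)]
    · rw [if_neg h1]
  · intro habs; exact absurd (Finset.mem_range.mpr hj₀) habs

private lemma eval_homog_mul' {n m : ℕ} {q : MvPolynomial (Fin n) ℂ} (hq : q.IsHomogeneous m)
    (l : ℂ) (z : Fin n → ℂ) :
    eval (fun t => l * z t) q = l ^ m * eval z q := by
  rw [eval_eq, eval_eq, Finset.mul_sum]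
  refine Finset.sum_congr rfl fun u hu => ?_
  have hdeg : (∑ t ∈ u.support, u t) = m := by
    have := hq (MvPolynomial.mem_support_iff.mp hu)
    simpa [Finsupp.weight_apply, Finsupp.sum] using this
  rw [← hdeg]
  simp only [mul_pow]
  rw [Finset.prod_mul_distrib, Finset.prod_pow_eq_pow_sum]
  ring

private lemma sum_homog_eq' {n D : ℕ} (q : MvPolynomial (Fin n) ℂ) (hq : q.totalDegree < D) :
    ∑ j ∈ range D, homogeneousComponent j q = q := by
  conv_rhs => rw [← sum_homogeneousComponent q]
  symm
  apply Finset.sum_subset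
  · intro x hx
    rw [Finset.mem_range] at *
    omega
  · intro x hx hx'
    rw [Finset.mem_range] at hx'
    exact homogeneousComponent_eq_zero x q (by omega)

private lemma eval_decomp' {n D : ℕ} (q : MvPolynomial (Fin n) ℂ) (hq : q.totalDegree < D)
    (l : ℂ) (z : Fin n → ℂ) :
    eval (fun t => l * z t) q =
      ∑ j ∈ range D, l ^ j * eval z (homogeneousComponent j q) := by
  conv_lhs => rw [← sum_homog_eq' q hq]
  rw [map_sum]
  exact Finset.sum_congr rfl fun j _ =>
    eval_homog_mul' (homogeneousComponent_isHomogeneous j q) l z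

private lemma norm_sq_complex' (e : ℂ) : ((‖e‖ : ℂ))^2 = e * (starRingEnd ℂ) e := by
  rw [Complex.mul_conj, Complex.normSq_eq_norm_sq]
  norm_cast

private lemma complex_sum_expand' {N D : ℕ} (e : Fin N → ℕ → ℂ) (μ : ℂ) :
    ∑ i, (∑ j ∈ range D, μ ^ j * e i j) * (starRingEnd ℂ) (∑ k ∈ range D, μ ^ k * e i k)
      = ∑ j ∈ range D, ∑ k ∈ range D,
          (∑ i, e i j * (starRingEnd ℂ) (e i k)) * μ ^ j * (starRingEnd ℂ μ) ^ k := by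
  calc ∑ i, (∑ j ∈ range D, μ ^ j * e i j) * (starRingEnd ℂ) (∑ k ∈ range D, μ ^ k * e i k)
      = ∑ i, ∑ j ∈ range D, ∑ k ∈ range D,
          (μ ^ j * e i j) * ((starRingEnd ℂ μ) ^ k * (starRingEnd ℂ) (e i k)) := by
        refine Finset.sum_congr rfl fun i _ => ?_
        rw [map_sum, Finset.sum_mul_sum]
        refine Finset.sum_congr rfl fun j _ => Finset.sum_congr rfl fun k _ => ?_
        rw [map_mul, map_pow]
    _ = ∑ j ∈ range D, ∑ k ∈ range D, ∑ i,
          (μ ^ j * e i j) * ((starRingEnd ℂ μ) ^ k * (starRingEnd ℂ) (e i k)) := by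
        rw [Finset.sum_comm]
        exact Finset.sum_congr rfl fun j _ => Finset.sum_comm
    _ = ∑ j ∈ range D, ∑ k ∈ range D,
          (∑ i, e i j * (starRingEnd ℂ) (e i k)) * μ ^ j * (starRingEnd ℂ μ) ^ k := by
        refine Finset.sum_congr rfl fun j _ => Finset.sum_congr rfl fun k _ => ?_
        rw [Finset.sum_mul, Finset.sum_mul]
        refine Finset.sum_congr rfl fun i _ => by ring

end Aux

/-- The truncation of a polynomial to its homogeneous terms of degree at most
`d - 1`. -/
noncomputable def truncBelow (n d : ℕ) (p : MvPolynomial (Fin n) ℂ) :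
    MvPolynomial (Fin n) ℂ :=
  ∑ j ∈ Finset.range d, homogeneousComponent j p

section Aux2

open Finset

private lemma fact_expand' {n N D : ℕ} (p : Fin N → MvPolynomial (Fin n) ℂ)
    (hdeg : ∀ i, (p i).totalDegree < D) (zf : Fin n → ℂ) (μ : ℂ) :
    ((∑ i, ‖eval (fun t => μ * zf t) (p i)‖ ^ 2 : ℝ) : ℂ)
      = ∑ j ∈ range D, ∑ k ∈ range D,
          (∑ i, eval zf (homogeneousComponent j (p i)) *
            (starRingEnd ℂ) (eval zf (homogeneousComponent k (p i)))) * μ ^ j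
            * (starRingEnd ℂ μ) ^ k := by
  push_cast
  calc ∑ i, ((‖eval (fun t => μ * zf t) (p i)‖ : ℂ))^2
      = ∑ i, (∑ j ∈ range D, μ ^ j * eval zf (homogeneousComponent j (p i))) *
          (starRingEnd ℂ) (∑ k ∈ range D, μ ^ k * eval zf (homogeneousComponent k (p i))) := by
        refine Finset.sum_congr rfl fun i _ => ?_
        rw [norm_sq_complex', eval_decomp' (p i) (hdeg i) μ zf]
    _ = _ := complex_sum_expand' (fun i j => eval zf (homogeneousComponent j (p i))) μ

private lemma fact_expand_trunc' {n N d : ℕ} (p : Fin N → MvPolynomial (Fin n) ℂ)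
    (zf : Fin n → ℂ) (μ : ℂ) :
    ((∑ i, ‖eval (fun t => μ * zf t) (truncBelow n d (p i))‖ ^ 2 : ℝ) : ℂ)
      = ∑ j ∈ range d, ∑ k ∈ range d,
          (∑ i, eval zf (homogeneousComponent j (p i)) *
            (starRingEnd ℂ) (eval zf (homogeneousComponent k (p i)))) * μ ^ j
            * (starRingEnd ℂ μ) ^ k := by
  push_cast
  calc ∑ i, ((‖eval (fun t => μ * zf t) (truncBelow n d (p i))‖ : ℂ))^2
      = ∑ i, (∑ j ∈ range d, μ ^ j * eval zf (homogeneousComponent j (p i))) *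
          (starRingEnd ℂ) (∑ k ∈ range d, μ ^ k * eval zf (homogeneousComponent k (p i))) := by
        refine Finset.sum_congr rfl fun i _ => ?_
        rw [norm_sq_complex']
        congr 2
        · unfold truncBelow
          rw [map_sum]
          exact Finset.sum_congr rfl fun j _ =>
            eval_homog_mul' (homogeneousComponent_isHomogeneous j (p i)) μ zf
        · unfold truncBelow
          rw [map_sum]
          exact Finset.sum_congr rfl fun j _ =>
            eval_homog_mul' (homogeneousComponent_isHomogeneous j (p i)) μ zf
    _ = _ := complex_sum_expand' (fun i j => eval zf (homogeneousComponent j (p i))) μ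

end Aux2

/-- The `(d-1)`-jet at the origin of an origin-preserving proper polynomial map of
degree at most `d` between balls determines the map up to norm equivalence. -/
theorem jet_determination_of_proper_polynomial_maps
    (n d : ℕ) (hn : 1 ≤ n) (hd : 1 ≤ d) (N N' : ℕ)
    (p : Fin N → MvPolynomial (Fin n) ℂ) (p' : Fin N' → MvPolynomial (Fin n) ℂ)
    (hdeg : ∀ i, (p i).totalDegree ≤ d) (hdeg' : ∀ i, (p' i).totalDegree ≤ d)
    (h0 : ∀ i, eval (fun _ : Fin n => (0 : ℂ)) (p i) = 0)
    (h0' : ∀ i, eval (fun _ : Fin n => (0 : ℂ)) (p' i) = 0)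
    (hs : ∀ z : EuclideanSpace ℂ (Fin n), ‖z‖ = 1 →
      ∑ i, ‖eval (fun j => z j) (p i)‖ ^ 2 = 1)
    (hs' : ∀ z : EuclideanSpace ℂ (Fin n), ‖z‖ = 1 →
      ∑ i, ‖eval (fun j => z j) (p' i)‖ ^ 2 = 1)
    (hjet : ∀ z : Fin n → ℂ,
      ∑ i, ‖eval z (truncBelow n d (p i))‖ ^ 2 =
        ∑ i, ‖eval z (truncBelow n d (p' i))‖ ^ 2) :
    ∀ z : Fin n → ℂ,
      ∑ i, ‖eval z (p i)‖ ^ 2 = ∑ i, ‖eval z (p' i)‖ ^ 2 := by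
  classical
  intro w
  by_cases hw : w = (fun _ => (0 : ℂ))
  · subst hw
    have e1 : ∑ i, ‖eval (fun _ : Fin n => (0:ℂ)) (p i)‖ ^ 2 = 0 :=
      Finset.sum_eq_zero fun i _ => by rw [h0 i]; simp
    have e2 : ∑ i, ‖eval (fun _ : Fin n => (0:ℂ)) (p' i)‖ ^ 2 = 0 :=
      Finset.sum_eq_zero fun i _ => by rw [h0' i]; simp
    rw [e1, e2]
  · -- nonzero case
    set W : EuclideanSpace ℂ (Fin n) := WithLp.toLp 2 w with hWdef
    have hW : W ≠ 0 := by
      intro h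
      apply hw
      funext t
      exact congrArg (fun v : EuclideanSpace ℂ (Fin n) => v t) h
    set z : EuclideanSpace ℂ (Fin n) := (‖W‖⁻¹ : ℂ) • W with hzdef
    have hz : ‖z‖ = 1 := norm_smul_inv_norm hW
    set zf : Fin n → ℂ := fun t => z t with hzf
    have hWn : (‖W‖ : ℝ) ≠ 0 := norm_ne_zero_iff.mpr hW
    have hwz : ∀ t, (‖W‖ : ℂ) * zf t = w t := by
      intro t
      have : zf t = (‖W‖⁻¹ : ℂ) * w t := rfl
      rw [this, ← mul_assoc,
        mul_inv_cancel₀ (show (‖W‖ : ℂ) ≠ 0 by exact_mod_cast hWn), one_mul]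
    -- coefficient functions
    set c : ℕ → ℕ → ℂ := fun j k => ∑ i, eval zf (homogeneousComponent j (p i)) *
        (starRingEnd ℂ) (eval zf (homogeneousComponent k (p i))) with hcdef
    set c' : ℕ → ℕ → ℂ := fun j k => ∑ i, eval zf (homogeneousComponent j (p' i)) *
        (starRingEnd ℂ) (eval zf (homogeneousComponent k (p' i))) with hc'def
    have hdlt : ∀ i, (p i).totalDegree < d + 1 := fun i => Nat.lt_succ_of_le (hdeg i)
    have hdlt' : ∀ i, (p' i).totalDegree < d + 1 := fun i => Nat.lt_succ_of_le (hdeg' i)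
    -- step 3 : low coefficients agree
    have step3 : ∀ j k, j < d → k < d → c j k = c' j k := by
      have key := all_coeffs_zero' (D := d) (fun j k => c j k - c' j k) ?_
      · intro j k hj hk
        have := key j k hj hk
        linear_combination this
      · intro μ
        have h1 := fact_expand_trunc' (d := d) p zf μ
        have h2 := fact_expand_trunc' (d := d) p' zf μ
        have h3 := hjet (fun t => μ * zf t)
        have : (∑ j ∈ Finset.range d, ∑ k ∈ Finset.range d,
            c j k * μ ^ j * (starRingEnd ℂ μ) ^ k) =
            ∑ j ∈ Finset.range d, ∑ k ∈ Finset.range d,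
            c' j k * μ ^ j * (starRingEnd ℂ μ) ^ k := by
          rw [← h1, ← h2, h3]
        simp only [sub_mul, Finset.sum_sub_distrib]
        rw [this, sub_self]
    -- step 4 : circle relations
    have step4 : ∀ s : ℕ, ∑ j ∈ Finset.range (d+1), ∑ k ∈ Finset.range (d+1),
        (if (d+1) + j = s + k then c j k - c' j k else 0) = 0 := by
      apply circle_coeffs'
      intro μ hμ
      have hnz : ‖(μ • z : EuclideanSpace ℂ (Fin n))‖ = 1 := by
        rw [norm_smul, hz, mul_one, hμ]
      have happ : (fun t : Fin n => (μ • z : EuclideanSpace ℂ (Fin n)) t)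
          = fun t => μ * zf t := rfl
      have e1 := hs (μ • z) hnz
      have e2 := hs' (μ • z) hnz
      rw [show (fun j : Fin n => (μ • z : EuclideanSpace ℂ (Fin n)) j)
          = fun t => μ * zf t from happ] at e1 e2
      have f1 := fact_expand' (D := d+1) p hdlt zf μ
      have f2 := fact_expand' (D := d+1) p' hdlt' zf μ
      rw [e1] at f1
      rw [e2] at f2
      simp only [sub_mul, Finset.sum_sub_distrib]
      rw [← f1, ← f2, sub_self]
    -- step 6 : all coefficients agree
    have step6 : ∀ J K, J < d + 1 → K < d + 1 → c J K = c' J K := by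
      intro J K hJ hK
      by_cases hsmall : J < d ∧ K < d
      · exact step3 J K hsmall.1 hsmall.2
      · have hJK : J = d ∨ K = d := by omega
        have h5 := step4 ((d+1) + J - K)
        have hsum : (∑ j ∈ Finset.range (d+1), ∑ k ∈ Finset.range (d+1),
            (if (d+1) + j = ((d+1) + J - K) + k then c j k - c' j k else 0)) =
            c J K - c' J K := by
          rw [Finset.sum_eq_single J]
          · rw [Finset.sum_eq_single K]
            · rw [if_pos (by omega)]
            · intro k hk hne
              have hkr : k < d + 1 := Finset.mem_range.mp hk
              by_cases h1 : (d+1) + J = ((d+1) + J - K) + k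
              · rw [if_pos h1]
                have : J < d ∧ k < d := by omega
                rw [step3 J k this.1 this.2]
                ring
              · rw [if_neg h1]
            · intro habs; exact absurd (Finset.mem_range.mpr hK) habs
          · intro j hj hne
            have hjr : j < d + 1 := Finset.mem_range.mp hj
            apply Finset.sum_eq_zero
            intro k hk
            have hkr : k < d + 1 := Finset.mem_range.mp hk
            by_cases h1 : (d+1) + j = ((d+1) + J - K) + k
            · rw [if_pos h1]
              have : j < d ∧ k < d := by omega
              rw [step3 j k this.1 this.2]
              ring
            · rw [if_neg h1]
          · intro habs; exact absurd (Finset.mem_range.mpr hJ) habs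
        rw [hsum] at h5
        linear_combination h5
    -- conclusion
    have hwfun : w = fun t => (‖W‖ : ℂ) * zf t := funext fun t => (hwz t).symm
    apply Complex.ofReal_injective
    rw [hwfun]
    have f1 := fact_expand' (D := d+1) p hdlt zf (‖W‖ : ℂ)
    have f2 := fact_expand' (D := d+1) p' hdlt' zf (‖W‖ : ℂ)
    rw [f1, f2]
    refine Finset.sum_congr rfl fun j hj => Finset.sum_congr rfl fun k hk => ?_
    exact congrArg (fun t => t * (‖W‖:ℂ) ^ j * (starRingEnd ℂ) ((‖W‖:ℂ)) ^ k)
      (step6 j k (Finset.mem_range.mp hj) (Finset.mem_range.mp hk))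
end

section
/- Let p : ℂ^n → ℂ^N be a polynomial map with ‖p(z)‖ = 1 for all z ∈ ℂ^n with ‖z‖ = 1. Write p = Σ_{j=ν}^{d} p_j, where p_j is the homogeneous part of p of degree j, p_ν ≠ 0 is the lowest-order nonzero part and p_d ≠ 0 is the highest-order nonzero part, and assume ν < d. Then ⟨p_ν(z), p_d(z)⟩ = 0 for all z ∈ ℂ^n; that is, the lowest-order part of p is orthogonal to the highest-order part. -/
open MvPolynomial

lemma eval_mul_scale {n : ℕ} {h : MvPolynomial (Fin n) ℂ} {m : ℕ}
    (hh : h.IsHomogeneous m) (t : ℂ) (z : Fin n → ℂ) :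
    eval (fun i => t * z i) h = t ^ m * eval z h := by
  rw [eval_eq, eval_eq, Finset.mul_sum]
  apply Finset.sum_congr rfl
  intro dd hdd
  have hsum : ∑ i ∈ dd.support, dd i = m := by
    have := hh (mem_support_iff.mp hdd)
    simpa [Finsupp.weight, Finsupp.degree, Finsupp.linearCombination, Finsupp.sum] using this
  have : ∀ i, (t * z i) ^ dd i = t ^ dd i * z i ^ dd i := fun i => mul_pow _ _ _
  simp_rw [this, Finset.prod_mul_distrib, Finset.prod_pow_eq_pow_sum, hsum]
  ring

lemma eval_scale_sum {n d : ℕ} (φ : MvPolynomial (Fin n) ℂ)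
    (hb : ∀ j, d < j → homogeneousComponent j φ = 0) (t : ℂ) (z : Fin n → ℂ) :
    eval (fun i => t * z i) φ = ∑ j ∈ Finset.range (d + 1), t ^ j * eval z (homogeneousComponent j φ) := by
  have hM : φ = ∑ j ∈ Finset.range (max φ.totalDegree d + 1), homogeneousComponent j φ := by
    have h1 := sum_homogeneousComponent φ
    conv_lhs => rw [← h1]
    refine Finset.sum_subset ?_ ?_
    · exact Finset.range_subset_range.2 (by omega)
    · intro j _ hj
      exact homogeneousComponent_eq_zero j φ (by simp at hj; omega)
  calc eval (fun i => t * z i) φ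
      = ∑ j ∈ Finset.range (max φ.totalDegree d + 1),
          t ^ j * eval z (homogeneousComponent j φ) := by
        conv_lhs => rw [hM]
        rw [map_sum]
        exact Finset.sum_congr rfl fun j _ =>
          eval_mul_scale (homogeneousComponent_isHomogeneous j φ) t z
    _ = _ := by
        refine (Finset.sum_subset (Finset.range_subset_range.2 (by omega)) ?_).symm
        intro j _ hj
        rw [hb j (by simp at hj; omega)]
        simp

lemma circle_infinite : {t : ℂ | ‖t‖ = 1}.Infinite := by
  have hmaps : Set.MapsTo (fun θ : ℝ => Complex.exp (θ * Complex.I))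
      (Set.Ioo 0 1) {t : ℂ | ‖t‖ = 1} := by
    intro θ _
    simpa using Complex.norm_exp_ofReal_mul_I θ
  have hinj : Set.InjOn (fun θ : ℝ => Complex.exp (θ * Complex.I)) (Set.Ioo 0 1) := by
    intro a ha b hb hab
    obtain ⟨k, hk⟩ := Complex.exp_eq_exp_iff_exists_int.mp hab
    have h2 : ((a : ℂ) - b - k * (2 * Real.pi)) * Complex.I = 0 := by
      push_cast at hk ⊢; linear_combination hk
    have h3 : ((a : ℂ) - b - k * (2 * Real.pi)) = 0 :=
      (mul_eq_zero.mp h2).resolve_right Complex.I_ne_zero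
    have hre : a - b - k * (2 * Real.pi) = 0 := by exact_mod_cast congrArg Complex.re h3
    have hpi := Real.pi_gt_three
    simp only [Set.mem_Ioo] at ha hb
    have hk0 : k = 0 := by
      rcases lt_trichotomy k 0 with h | h | h
      · have : (k : ℝ) ≤ -1 := by exact_mod_cast (by omega : k ≤ -1)
        nlinarith
      · exact h
      · have : (1 : ℝ) ≤ (k : ℝ) := by exact_mod_cast h
        nlinarith
    rw [hk0] at hre; push_cast at hre; linarith
  exact Set.Infinite.mono hmaps.image_subset ((Set.Ioo_infinite (by norm_num)).image hinj)

lemma key_unit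
    (n N : ℕ) (p : Fin N → MvPolynomial (Fin n) ℂ)
    (hp : ∀ z : EuclideanSpace ℂ (Fin n), ‖z‖ = 1 →
      ∑ i, ‖eval (fun j => z j) (p i)‖ ^ 2 = 1)
    (ν d : ℕ) (hνd : ν < d)
    (hlow : ∀ j < ν, ∀ i, homogeneousComponent j (p i) = 0)
    (hhigh : ∀ j, d < j → ∀ i, homogeneousComponent j (p i) = 0)
    (u : Fin n → ℂ) (hu : ∑ i, ‖u i‖ ^ 2 = 1) :
    ∑ i, eval u (homogeneousComponent ν (p i)) *
        (starRingEnd ℂ) (eval u (homogeneousComponent d (p i))) = 0 := by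
  set A : Fin N → ℕ → ℂ := fun i j => eval u (homogeneousComponent j (p i)) with hA
  set a : ℕ → ℕ → ℂ := fun j k => ∑ i, A i j * (starRingEnd ℂ) (A i k) with ha
  set q : Polynomial ℂ :=
    (∑ j ∈ Finset.range (d+1), ∑ k ∈ Finset.range (d+1),
      Polynomial.C (a j k) * Polynomial.X ^ (d + j - k)) - Polynomial.X ^ d with hqdef
  have hroot : ∀ t : ℂ, ‖t‖ = 1 → q.eval t = 0 := by
    intro t ht
    have ht0 : t ≠ 0 := by intro h; rw [h] at ht; simp at ht
    have h1 : t * (starRingEnd ℂ) t = 1 := by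
      rw [Complex.mul_conj]
      norm_cast
      rw [Complex.normSq_eq_norm_sq, ht]; norm_num
    have htc : (starRingEnd ℂ) t = t⁻¹ :=
      eq_inv_of_mul_eq_one_left (by linear_combination h1)
    -- the unit-sphere identity at t • u
    have hw : ∑ i, eval (fun j => t * u j) (p i) *
        (starRingEnd ℂ) (eval (fun j => t * u j) (p i)) = 1 := by
      have hnorm : ‖((WithLp.equiv 2 (Fin n → ℂ)).symm (fun j => t * u j))‖ = 1 := by
        rw [EuclideanSpace.norm_eq]
        have : ∀ j, ‖(WithLp.equiv 2 (Fin n → ℂ)).symm (fun j => t * u j) j‖ ^ 2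
            = ‖u j‖ ^ 2 := by
          intro j
          show ‖t * u j‖ ^ 2 = _
          rw [norm_mul, ht, one_mul]
        simp only [this]
        rw [hu]; norm_num
      have h2 := hp ((WithLp.equiv 2 (Fin n → ℂ)).symm (fun j => t * u j)) hnorm
      have hmc : ∀ w : ℂ, w * (starRingEnd ℂ) w = ((‖w‖ ^ 2 : ℝ) : ℂ) := by
        intro w
        rw [Complex.mul_conj]
        norm_cast
        rw [Complex.normSq_eq_norm_sq]
      simp_rw [hmc]
      norm_cast
    have hexp : ∀ i, eval (fun j => t * u j) (p i)
        = ∑ j ∈ Finset.range (d+1), t ^ j * A i j := fun i =>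
      eval_scale_sum (p i) (fun j hj => hhigh j hj i) t u
    have hw2 : ∑ j ∈ Finset.range (d+1), ∑ k ∈ Finset.range (d+1),
        a j k * (t ^ j * ((starRingEnd ℂ) t) ^ k) = 1 := by
      rw [← hw]
      have hconj : ∀ i, (starRingEnd ℂ) (eval (fun j => t * u j) (p i))
          = ∑ k ∈ Finset.range (d+1), ((starRingEnd ℂ) t) ^ k * (starRingEnd ℂ) (A i k) := by
        intro i
        rw [hexp i, map_sum]
        exact Finset.sum_congr rfl fun k _ => by rw [map_mul, map_pow]
      calc ∑ j ∈ Finset.range (d+1), ∑ k ∈ Finset.range (d+1),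
            a j k * (t ^ j * ((starRingEnd ℂ) t) ^ k)
          = ∑ j ∈ Finset.range (d+1), ∑ k ∈ Finset.range (d+1), ∑ i,
              (t ^ j * A i j) * (((starRingEnd ℂ) t) ^ k * (starRingEnd ℂ) (A i k)) := by
            refine Finset.sum_congr rfl fun j _ => Finset.sum_congr rfl fun k _ => ?_
            rw [ha]
            rw [Finset.sum_mul]
            exact Finset.sum_congr rfl fun i _ => by ring
        _ = ∑ j ∈ Finset.range (d+1), ∑ i, ∑ k ∈ Finset.range (d+1),
              (t ^ j * A i j) * (((starRingEnd ℂ) t) ^ k * (starRingEnd ℂ) (A i k)) :=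
            Finset.sum_congr rfl fun j _ => Finset.sum_comm
        _ = ∑ i, ∑ j ∈ Finset.range (d+1), ∑ k ∈ Finset.range (d+1),
              (t ^ j * A i j) * (((starRingEnd ℂ) t) ^ k * (starRingEnd ℂ) (A i k)) :=
            Finset.sum_comm
        _ = ∑ i, eval (fun j => t * u j) (p i) *
              (starRingEnd ℂ) (eval (fun j => t * u j) (p i)) := by
            refine Finset.sum_congr rfl fun i _ => ?_
            rw [hconj i, hexp i]
            exact (Finset.sum_mul_sum _ _ _ _).symm
    -- now evaluate q at t
    have hpow : ∀ j k, k ∈ Finset.range (d+1) →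
        t ^ (d + j - k) = t ^ d * (t ^ j * ((starRingEnd ℂ) t) ^ k) := by
      intro j k hk
      simp only [Finset.mem_range] at hk
      rw [htc, inv_pow]
      have hk2 : t ^ k ≠ 0 := pow_ne_zero k ht0
      have hh : t ^ (d + j - k) * t ^ k = t ^ d * t ^ j := by
        rw [← pow_add, ← pow_add]
        congr 1
        omega
      calc t ^ (d + j - k) = (t ^ (d + j - k) * t ^ k) * (t ^ k)⁻¹ := by field_simp
        _ = (t ^ d * t ^ j) * (t ^ k)⁻¹ := by rw [hh]
        _ = t ^ d * (t ^ j * (t ^ k)⁻¹) := by ring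
    have hsum : ∑ j ∈ Finset.range (d+1), ∑ k ∈ Finset.range (d+1),
        a j k * t ^ (d + j - k) = t ^ d := by
      calc ∑ j ∈ Finset.range (d+1), ∑ k ∈ Finset.range (d+1), a j k * t ^ (d + j - k)
          = ∑ j ∈ Finset.range (d+1), ∑ k ∈ Finset.range (d+1),
              t ^ d * (a j k * (t ^ j * ((starRingEnd ℂ) t) ^ k)) := by
            refine Finset.sum_congr rfl fun j _ => Finset.sum_congr rfl fun k hk => ?_
            rw [hpow j k hk]; ring
        _ = t ^ d * ∑ j ∈ Finset.range (d+1), ∑ k ∈ Finset.range (d+1),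
              a j k * (t ^ j * ((starRingEnd ℂ) t) ^ k) := by
            rw [Finset.mul_sum]
            exact Finset.sum_congr rfl fun j _ => (Finset.mul_sum _ _ _).symm
        _ = t ^ d := by rw [hw2, mul_one]
    rw [hqdef]
    rw [Polynomial.eval_sub, Polynomial.eval_pow, Polynomial.eval_X, Polynomial.eval_finset_sum]
    simp_rw [Polynomial.eval_finset_sum, Polynomial.eval_mul, Polynomial.eval_C,
      Polynomial.eval_pow, Polynomial.eval_X]
    rw [hsum, sub_self]
  have hq0 : q = 0 :=
    Polynomial.eq_zero_of_infinite_isRoot q (circle_infinite.mono (fun t ht => hroot t ht))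
  have hcoeff : q.coeff ν = (∑ j ∈ Finset.range (d+1), ∑ k ∈ Finset.range (d+1),
      (if ν = d + j - k then a j k else 0)) := by
    rw [hqdef, Polynomial.coeff_sub, Polynomial.coeff_X_pow, if_neg (by omega : ¬ ν = d)]
    rw [Polynomial.finset_sum_coeff]
    simp_rw [Polynomial.finset_sum_coeff, Polynomial.coeff_C_mul, Polynomial.coeff_X_pow,
      mul_ite, mul_one, mul_zero]
    ring
  have hcomp : ∑ j ∈ Finset.range (d+1), ∑ k ∈ Finset.range (d+1),
      (if ν = d + j - k then a j k else 0) = a ν d := by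
    rw [Finset.sum_eq_single_of_mem ν (Finset.mem_range.2 (by omega))]
    · rw [Finset.sum_eq_single_of_mem d (Finset.mem_range.2 (by omega))]
      · rw [if_pos (by omega)]
      · intro k hk hkd
        simp only [Finset.mem_range] at hk
        rw [if_neg (by omega)]
    · intro j hj hjν
      simp only [Finset.mem_range] at hj
      apply Finset.sum_eq_zero
      intro k hk
      simp only [Finset.mem_range] at hk
      by_cases hc : ν = d + j - k
      · rw [if_pos hc]
        have hjlt : j < ν := by omega
        rw [ha]
        apply Finset.sum_eq_zero
        intro i _
        show eval u (homogeneousComponent j (p i)) * _ = 0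
        rw [hlow j hjlt i]
        simp
      · rw [if_neg hc]
  have hfin : a ν d = 0 := by
    rw [← hcomp, ← hcoeff, hq0, Polynomial.coeff_zero]
  simpa [ha, hA] using hfin

/-- For a proper polynomial map `p` between balls (`‖p(z)‖ = 1` on the unit
sphere), the lowest-order nonzero homogeneous part `p_ν` is orthogonal to the
highest-order nonzero homogeneous part `p_d` (when `ν < d`). -/
theorem lowest_part_orthogonal_highest_part
    (n N : ℕ) (p : Fin N → MvPolynomial (Fin n) ℂ)
    (hp : ∀ z : EuclideanSpace ℂ (Fin n), ‖z‖ = 1 →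
      ∑ i, ‖eval (fun j => z j) (p i)‖ ^ 2 = 1)
    (ν d : ℕ) (hνd : ν < d)
    (hlow : ∀ j < ν, ∀ i, homogeneousComponent j (p i) = 0)
    (hν : ∃ i, homogeneousComponent ν (p i) ≠ 0)
    (hhigh : ∀ j, d < j → ∀ i, homogeneousComponent j (p i) = 0)
    (hd : ∃ i, homogeneousComponent d (p i) ≠ 0) :
    ∀ z : Fin n → ℂ,
      ∑ i, eval z (homogeneousComponent ν (p i)) *
        (starRingEnd ℂ) (eval z (homogeneousComponent d (p i))) = 0 := by
  intro z
  by_cases hz : z = 0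
  · subst hz
    apply Finset.sum_eq_zero
    intro i _
    have h := eval_mul_scale (homogeneousComponent_isHomogeneous d (p i)) 0 (0 : Fin n → ℂ)
    have hz0 : eval (0 : Fin n → ℂ) (homogeneousComponent d (p i)) = 0 := by
      simpa [zero_pow (by omega : d ≠ 0)] using h
    rw [hz0]
    simp
  · set r : ℝ := Real.sqrt (∑ i, ‖z i‖ ^ 2) with hr
    have hs_pos : 0 < ∑ i, ‖z i‖ ^ 2 := by
      obtain ⟨i, hi⟩ := Function.ne_iff.mp hz
      have hi' : z i ≠ 0 := by simpa using hi
      exact Finset.sum_pos' (fun j _ => by positivity)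
        ⟨i, Finset.mem_univ i, pow_pos (norm_pos_iff.2 hi') 2⟩
    have hr_pos : 0 < r := Real.sqrt_pos.2 hs_pos
    set u : Fin n → ℂ := fun i => (r : ℂ)⁻¹ * z i with huu
    have hu : ∑ i, ‖u i‖ ^ 2 = 1 := by
      have h1 : ∀ i, ‖u i‖ ^ 2 = r⁻¹ ^ 2 * ‖z i‖ ^ 2 := by
        intro i
        rw [huu]
        simp [norm_mul, mul_pow, abs_of_pos hr_pos]
      simp_rw [h1]
      rw [← Finset.mul_sum]
      have h2 : r ^ 2 = ∑ i, ‖z i‖ ^ 2 := Real.sq_sqrt hs_pos.le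
      rw [← h2]
      field_simp
    have hkey := key_unit n N p hp ν d hνd hlow hhigh u hu
    have hzed : ∀ i (m : ℕ), eval z (homogeneousComponent m (p i))
        = (r:ℂ) ^ m * eval u (homogeneousComponent m (p i)) := by
      intro i m
      have h := eval_mul_scale (homogeneousComponent_isHomogeneous m (p i)) (r:ℂ) u
      have h2 : (fun j => (r:ℂ) * u j) = z := by
        funext j
        rw [huu]
        have : (r : ℂ) ≠ 0 := by exact_mod_cast hr_pos.ne'
        field_simp
      rwa [h2] at h
    have hfin : ∑ i, eval z (homogeneousComponent ν (p i)) *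
        (starRingEnd ℂ) (eval z (homogeneousComponent d (p i)))
        = ((r:ℂ) ^ ν * (r:ℂ) ^ d) * ∑ i, eval u (homogeneousComponent ν (p i)) *
          (starRingEnd ℂ) (eval u (homogeneousComponent d (p i))) := by
      rw [Finset.mul_sum]
      refine Finset.sum_congr rfl fun i _ => ?_
      rw [hzed i ν, hzed i d, map_mul, map_pow, Complex.conj_ofReal]
      ring
    rw [hfin, hkey, mul_zero]
end

section
/- For every integer n ≥ 2 there exist nonnegative real numbers c_1, …, c_{n−2} such that x^{2n−3} + Σ_{s=1}^{n−2} c_s·x^{2n−3−2s}·y^s + y^{2n−3} = 1 for all real x, y with x + y = 1. Consequently, the monomial map V(z,w) = (z^{2n−3}, √c_1·z^{2n−5}w, …, √c_s·z^{2n−3−2s}w^s, …, √c_{n−2}·z·w^{n−2}, w^{2n−3}) satisfies ‖V(z,w)‖ = 1 whenever |z|² + |w|² = 1, and hence is a proper polynomial map from B_2 to B_n of degree 2n−3. -/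
/-- Coefficients of the Lucas-type polynomials: `L d = ∑ s, luc d s * x^(d-2s) * y^s`
with `L 0 = 2`, `L 1 = x`, `L (d+2) = x * L (d+1) + y * L d`. -/
def luc : ℕ → ℕ → ℕ
  | 0, 0 => 2
  | 0, _+1 => 0
  | 1, 0 => 1
  | 1, _+1 => 0
  | d+2, 0 => luc (d+1) 0
  | d+2, s+1 => luc (d+1) (s+1) + luc d s

lemma luc_zero : ∀ d, luc (d+1) 0 = 1
  | 0 => rfl
  | d+1 => by rw [luc]; exact luc_zero d

lemma luc_vanish : ∀ d s, d < 2*s → luc d s = 0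
  | 0, 0, h => absurd h (by omega)
  | 0, _+1, _ => rfl
  | 1, 0, h => absurd h (by omega)
  | 1, _+1, _ => rfl
  | d+2, 0, h => absurd h (by omega)
  | d+2, s+1, h => by
      rw [luc, luc_vanish (d+1) (s+1) (by omega), luc_vanish d s (by omega)]

lemma luc_sum : ∀ d : ℕ, ∀ x y : ℝ, x + y = 1 →
    ∑ s ∈ Finset.range (d/2+1), (luc d s : ℝ) * x^(d-2*s) * y^s = 1 + (-y)^d := by
  have main : ∀ d : ℕ,
      (∀ x y : ℝ, x + y = 1 →
        ∑ s ∈ Finset.range (d/2+1), (luc d s : ℝ) * x^(d-2*s) * y^s = 1 + (-y)^d) ∧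
      (∀ x y : ℝ, x + y = 1 →
        ∑ s ∈ Finset.range ((d+1)/2+1), (luc (d+1) s : ℝ) * x^((d+1)-2*s) * y^s
          = 1 + (-y)^(d+1)) := by
    intro d
    induction d with
    | zero =>
      constructor
      · intro x y h; norm_num [luc]
      · intro x y h; norm_num [luc]; linarith
    | succ d ih =>
      refine ⟨ih.2, ?_⟩
      intro x y h
      have hd2 : (d+1+1)/2 + 1 = d/2 + 2 := by omega
      rw [hd2]
      have split : ∀ s ∈ Finset.range (d/2+2), (luc (d+2) s : ℝ) * x^(d+2-2*s) * y^s
          = x * ((luc (d+1) s : ℝ) * x^((d+1)-2*s) * y^s)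
            + (if s = 0 then 0 else (luc d (s-1) : ℝ) * x^(d+2-2*s) * y^s) := by
        intro s _
        rcases s with _ | s
        · rw [if_pos rfl, show luc (d+2) 0 = luc (d+1) 0 from by rw [luc]]
          rw [show d+2-2*0 = ((d+1)-2*0)+1 from by omega, pow_succ]
          ring
        · rw [show luc (d+2) (s+1) = luc (d+1) (s+1) + luc d s from by rw [luc]]
          simp only [if_neg (Nat.succ_ne_zero s), Nat.add_sub_cancel]
          push_cast
          rw [add_mul, add_mul]
          congr 1
          by_cases hs : 2*(s+1) ≤ d+1
          · rw [show d+2-2*(s+1) = (d+1-2*(s+1))+1 from by omega, pow_succ]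
            ring
          · rw [luc_vanish (d+1) (s+1) (by omega)]
            push_cast; ring
      rw [Finset.sum_congr rfl split, Finset.sum_add_distrib]
      have h1 : ∑ s ∈ Finset.range (d/2+2),
          x * ((luc (d+1) s : ℝ) * x^((d+1)-2*s) * y^s) = x * (1 + (-y)^(d+1)) := by
        rw [← Finset.mul_sum]
        congr 1
        rw [← ih.2 x y h]
        refine (Finset.sum_subset ?_ ?_).symm
        · intro s hs
          simp only [Finset.mem_range] at *
          omega
        · intro s _ hs
          simp only [Finset.mem_range, not_lt] at hs
          rw [luc_vanish (d+1) s (by omega)]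
          push_cast; ring
      have h2 : ∑ s ∈ Finset.range (d/2+2),
          (if s = 0 then 0 else (luc d (s-1) : ℝ) * x^(d+2-2*s) * y^s)
          = y * (1 + (-y)^d) := by
        rw [Finset.sum_range_succ']
        simp only [Nat.succ_ne_zero, if_false, if_pos, Nat.add_sub_cancel, add_zero,
          reduceIte]
        rw [← ih.1 x y h, Finset.mul_sum]
        refine Finset.sum_congr rfl ?_
        intro s _
        rw [show d+2-2*(s+1) = d-2*s from by omega, pow_succ]
        ring
      rw [h1, h2]
      have : (-y)^(d+2) = -y * (-y)^(d+1) := by rw [pow_succ]; ring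
      rw [this, show (-y)^(d+1) = -y * (-y)^d from by rw [pow_succ]; ring]
      have hx : x = 1 - y := by linarith
      rw [hx]; ring
  exact fun d => (main d).1

/-- For every `n ≥ 2` there are nonnegative constants `c_1, …, c_{n-2}` with
`x^{2n-3} + Σ_s c_s x^{2n-3-2s} y^s + y^{2n-3} = 1` on the line `x + y = 1`;
consequently the monomial map
`V(z,w) = (z^{2n-3}, …, √c_s z^{2n-3-2s} w^s, …, w^{2n-3})` maps the unit sphere
of `ℂ²` to the unit sphere of `ℂ^n`, and so is a proper polynomial map from `B_2`
to `B_n` of degree `2n-3`. -/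
theorem exists_invariant_monomial_proper_map (n : ℕ) (hn : 2 ≤ n) :
    ∃ c : Fin (n - 2) → ℝ,
      (∀ s, 0 ≤ c s) ∧
      (∀ x y : ℝ, x + y = 1 →
        x ^ (2 * n - 3) +
          (∑ s : Fin (n - 2), c s * x ^ (2 * n - 3 - 2 * ((s : ℕ) + 1)) *
            y ^ ((s : ℕ) + 1)) +
          y ^ (2 * n - 3) = 1) ∧
      (∀ z w : ℂ, ‖z‖ ^ 2 + ‖w‖ ^ 2 = 1 →
        ‖z ^ (2 * n - 3)‖ ^ 2 +
          (∑ s : Fin (n - 2), c s *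
            ‖z ^ (2 * n - 3 - 2 * ((s : ℕ) + 1)) * w ^ ((s : ℕ) + 1)‖ ^ 2) +
          ‖w ^ (2 * n - 3)‖ ^ 2 = 1) := by
  set d := 2 * n - 3 with hd
  refine ⟨fun s => (luc d ((s : ℕ) + 1) : ℝ), fun s => by positivity, ?_, ?_⟩
  · intro x y h
    have key := luc_sum d x y h
    have hodd : Odd d := ⟨n - 2, by omega⟩
    rw [hodd.neg_pow] at key
    rw [show d/2 + 1 = (n-2) + 1 from by omega, Finset.sum_range_succ'] at key
    have h0 : luc d 0 = 1 := by
      rw [show d = (2*n-4)+1 from by omega]; exact luc_zero _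
    rw [h0] at key
    simp only [Nat.cast_one, Nat.mul_zero, Nat.sub_zero, pow_zero, one_mul, mul_one] at key
    rw [Fin.sum_univ_eq_sum_range (fun s => (luc d (s+1) : ℝ) * x ^ (d - 2*(s+1)) * y^(s+1))]
    linarith
  · intro z w hzw
    have key := luc_sum d (‖z‖^2) (‖w‖^2) hzw
    have hodd : Odd d := ⟨n - 2, by omega⟩
    rw [hodd.neg_pow] at key
    rw [show d/2 + 1 = (n-2) + 1 from by omega, Finset.sum_range_succ'] at key
    have h0 : luc d 0 = 1 := by
      rw [show d = (2*n-4)+1 from by omega]; exact luc_zero _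
    rw [h0] at key
    simp only [Nat.cast_one, Nat.mul_zero, Nat.sub_zero, pow_zero, one_mul, mul_one] at key
    have hz : ∀ k : ℕ, ‖z ^ k‖^2 = (‖z‖^2)^k := fun k => by
      rw [norm_pow, ← pow_mul, ← pow_mul, Nat.mul_comm]
    have hw : ∀ k : ℕ, ‖w ^ k‖^2 = (‖w‖^2)^k := fun k => by
      rw [norm_pow, ← pow_mul, ← pow_mul, Nat.mul_comm]
    rw [hz, hw]
    have hsum : ∀ s : Fin (n-2), (luc d ((s:ℕ)+1) : ℝ) *
        ‖z ^ (d - 2*((s:ℕ)+1)) * w ^ ((s:ℕ)+1)‖^2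
        = (luc d ((s:ℕ)+1) : ℝ) * (‖z‖^2) ^ (d - 2*((s:ℕ)+1)) * (‖w‖^2)^((s:ℕ)+1) := by
      intro s
      rw [norm_mul, mul_pow, hz, hw]
      ring
    rw [Finset.sum_congr rfl (fun s _ => hsum s)]
    rw [Fin.sum_univ_eq_sum_range
      (fun s => (luc d (s+1) : ℝ) * (‖z‖^2) ^ (d - 2*(s+1)) * (‖w‖^2)^(s+1))]
    linarith
end
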